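/- arXiv:2501.12371 — 10 statements merged into one kernel-verified Lean document; each statement's English description precedes it below -/
import Mathlib

section
/- Let q = K*·L* + T̄² with K*, L*, T̄ positive integers such that gcd(K*, T̄) = gcd(L*, T̄) = 1, let x be an integer coprime to q, and let y be an integer satisfying x·T̄ + y·K* ≡ 0 (mod q). Then gcd(y, q) = 1. -/
/-
`T̄` is coprime to `K*·L*`, hence to `q = K*·L* + T̄·T̄`. Then `x·T̄` is a unit modulo `q`,
and so is `-y·K* ≡ x·T̄`, which forces `y` to be a unit modulo `q`.
-/

theorem Nat.coprime_mul_add_sq {k l t : ℕ} (hk : Nat.Coprime k t) (hl : Nat.Coprime l t) :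
    Nat.Coprime t (k * l + t ^ 2) := by
  rw [sq, Nat.coprime_add_mul_right_right]
  exact Nat.Coprime.mul_right hk.symm hl.symm

theorem IsCoprime.of_dvd_mul_add_mul {R : Type*} [CommRing R] {x t y k q : R}
    (hx : IsCoprime x q) (ht : IsCoprime t q) (hq : q ∣ x * t + y * k) : IsCoprime y q := by
  obtain ⟨m, hm⟩ := hq
  have hxt : x * t = -(y * k) + m * q := by linear_combination hm
  have hyk : IsCoprime (-(y * k)) q := by
    simpa only [hxt, IsCoprime.add_mul_right_left_iff] using hx.mul_left ht
  exact (IsCoprime.neg_left_iff _ _ |>.mp hyk).of_mul_left_left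

theorem stmt2_general (Ks Ls Tb : ℕ)
    (h1 : Nat.Coprime Ks Tb) (h2 : Nat.Coprime Ls Tb)
    (q : ℕ) (hq : q = Ks * Ls + Tb ^ 2)
    (x y : ℤ) (hx : Int.gcd x q = 1)
    (hy : (q : ℤ) ∣ (x * Tb + y * Ks)) :
    Int.gcd y q = 1 := by
  have hTq : IsCoprime (Tb : ℤ) q := by
    rw [Nat.isCoprime_iff_coprime, hq]
    exact Nat.coprime_mul_add_sq h1 h2
  rw [← Int.isCoprime_iff_gcd_eq_one] at hx ⊢
  exact hx.of_dvd_mul_add_mul hTq hy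

theorem stmt2 (Ks Ls Tb : ℕ) (hKs : 0 < Ks) (hLs : 0 < Ls) (hTb : 0 < Tb)
    (h1 : Nat.Coprime Ks Tb) (h2 : Nat.Coprime Ls Tb)
    (q : ℕ) (hq : q = Ks * Ls + Tb ^ 2)
    (x y : ℤ) (hx : Int.gcd x q = 1)
    (hy : (q : ℤ) ∣ (x * Tb + y * Ks)) :
    Int.gcd y q = 1 :=
  stmt2_general Ks Ls Tb h1 h2 q hq x y hx hy
end

section
/- Let q = K*·L* + T̄² with gcd(K*, T̄) = gcd(L*, T̄) = 1, let x be coprime to q and y satisfy x·T̄ + y·K* ≡ 0 (mod q). Then x·L* − y·T̄ ≡ 0 (mod q), i.e., the pair (i, j) = (L*, T̄) is a solution of i·x ≡ j·y (mod q). -/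
theorem stmt3 (Ks Ls Tb : ℕ) (hKs : 0 < Ks) (hLs : 0 < Ls) (hTb : 0 < Tb)
    (h1 : Nat.Coprime Ks Tb) (h2 : Nat.Coprime Ls Tb)
    (q : ℕ) (hq : q = Ks * Ls + Tb ^ 2)
    (x y : ℤ) (hx : Int.gcd x q = 1)
    (hy : (q : ℤ) ∣ (x * Tb + y * Ks)) :
    (q : ℤ) ∣ (x * Ls - y * Tb) := by
  have hTq : Nat.Coprime Tb q := by
    rw [hq, pow_two]
    have : Nat.Coprime Tb (Ks * Ls) := (h1.symm).mul_right h2.symm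
    exact (Nat.coprime_add_mul_left_right Tb (Ks*Ls) Tb).mpr this
  have key : (q : ℤ) ∣ (Tb : ℤ) * (x * Ls - y * Tb) := by
    have : (Tb : ℤ) * (x * Ls - y * Tb) = Ls * (x * Tb + y * Ks) - y * q := by
      rw [hq]; push_cast; ring
    rw [this]
    exact dvd_sub (hy.mul_left _) (dvd_mul_left _ _)
  have hcop : IsCoprime (q : ℤ) (Tb : ℤ) := by
    rw [Int.isCoprime_iff_gcd_eq_one, Int.gcd_natCast_natCast]
    exact hTq.symm
  exact (hcop.dvd_of_dvd_mul_left key)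
end

section
/- Let q = K*·L* + T̄² with gcd(K*, T̄) = gcd(L*, T̄) = 1, let x be coprime to q and let y satisfy x·T̄ + y·K* ≡ 0 (mod q). Then every integer solution (i, j) of i·x ≡ j·y (mod q) can be written as i = −a·T̄ + b·L* and j = a·K* + b·T̄ for some integers a and b. -/
theorem stmt4 (Ks Ls Tb : ℕ) (hKs : 0 < Ks) (hLs : 0 < Ls) (hTb : 0 < Tb)
    (h1 : Nat.Coprime Ks Tb) (h2 : Nat.Coprime Ls Tb)
    (q : ℕ) (hq : q = Ks * Ls + Tb ^ 2)
    (x y : ℤ) (hx : Int.gcd x q = 1)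
    (hy : (q : ℤ) ∣ (x * Tb + y * Ks)) :
    ∀ i j : ℤ, (q : ℤ) ∣ (i * x - j * y) →
      ∃ a b : ℤ, i = -a * Tb + b * Ls ∧ j = a * Ks + b * Tb := by
  intro i j hij
  have hq' : (q : ℤ) = Ks * Ls + Tb ^ 2 := by push_cast [hq]; ring
  have hq0 : (q : ℤ) ≠ 0 := by rw [hq']; positivity
  have hx' : IsCoprime x (q : ℤ) := Int.isCoprime_iff_gcd_eq_one.mpr hx
  have hTq : Nat.Coprime Tb q := by
    rw [hq]
    have : Nat.Coprime Tb (Ks * Ls) := (h1.symm).mul_right h2.symm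
    simpa [pow_two] using (Nat.coprime_add_mul_left_right Tb (Ks*Ls) Tb).mpr this
  have hT' : IsCoprime (Tb : ℤ) (q : ℤ) := by
    rw [Int.isCoprime_iff_gcd_eq_one]
    simpa using hTq
  -- q ∣ i*K + j*T
  have d1 : (q : ℤ) ∣ x * (i * Ks + j * Tb) := by
    have : x * (i * Ks + j * Tb) = Ks * (i * x - j * y) + j * (x * Tb + y * Ks) := by ring
    rw [this]
    exact dvd_add (Dvd.dvd.mul_left hij _) (Dvd.dvd.mul_left hy _)
  have db : (q : ℤ) ∣ (i * Ks + j * Tb) := (hx'.symm).dvd_of_dvd_mul_left d1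
  -- q ∣ L*x - T*y
  have d2 : (q : ℤ) ∣ (Tb : ℤ) * (Ls * x - Tb * y) := by
    have : (Tb : ℤ) * (Ls * x - Tb * y) = Ls * (x * Tb + y * Ks) - y * (Ks * Ls + Tb ^ 2) := by
      ring
    rw [this, ← hq']
    exact dvd_sub (Dvd.dvd.mul_left hy _) (Dvd.dvd.mul_left dvd_rfl _)
  have d2' : (q : ℤ) ∣ (Ls * x - Tb * y) := (hT'.symm).dvd_of_dvd_mul_left d2
  -- q ∣ j*L - i*T
  have d3 : (q : ℤ) ∣ x * (j * Ls - i * Tb) := by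
    have : x * (j * Ls - i * Tb) = j * (Ls * x - Tb * y) - Tb * (i * x - j * y) := by ring
    rw [this]
    exact dvd_sub (Dvd.dvd.mul_left d2' _) (Dvd.dvd.mul_left hij _)
  have da : (q : ℤ) ∣ (j * Ls - i * Tb) := (hx'.symm).dvd_of_dvd_mul_left d3
  obtain ⟨a, ha⟩ := da
  obtain ⟨b, hb⟩ := db
  refine ⟨a, b, ?_, ?_⟩
  · apply mul_left_cancel₀ hq0
    linear_combination (Ls : ℤ) * hb - (Tb : ℤ) * ha + i * hq'
  · apply mul_left_cancel₀ hq0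
    linear_combination (Tb : ℤ) * hb + (Ks : ℤ) * ha + j * hq'
end

section
/- Let K ≥ L ≥ T ≥ 2 be integers, set T̄ = T−1, and let K* ≥ K+1 and L* ≥ L+1 be integers coprime to T̄, and q = K*·L* + T̄². Let x be coprime to q and y satisfy x·T̄ + y·K* ≡ 0 (mod q). Then the only integer solutions (i, j) of i·x ≡ j·y (mod q) with −L ≤ i ≤ T+L−1 and −K−T+1 ≤ j ≤ K−1 are (0, 0), (L*, T̄), and (T̄, −K*) — where the latter two are excluded if they fall outside the stated rectangle. -/
theorem stmt5 (K L T : ℤ) (hT : 2 ≤ T) (hLT : T ≤ L) (hKL : L ≤ K)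
    (Tb : ℤ) (hTb : Tb = T - 1)
    (Ks Ls : ℤ) (hKs1 : K + 1 ≤ Ks) (hLs1 : L + 1 ≤ Ls)
    (hKsc : Int.gcd Ks Tb = 1) (hLsc : Int.gcd Ls Tb = 1)
    (q : ℤ) (hq : q = Ks * Ls + Tb ^ 2)
    (x y : ℤ) (hx : Int.gcd x q = 1) (hy : q ∣ x * Tb + y * Ks) :
    ∀ i j : ℤ, q ∣ i * x - j * y →
      -L ≤ i → i ≤ T + L - 1 → -K - T + 1 ≤ j → j ≤ K - 1 →
      (i = 0 ∧ j = 0) ∨ (i = Ls ∧ j = Tb) ∨ (i = Tb ∧ j = -Ks) := by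
  intro i j hij hiL hiU hjL hjU
  have hxq : IsCoprime x q := Int.isCoprime_iff_gcd_eq_one.mpr hx
  obtain ⟨a, ha⟩ := hij
  obtain ⟨b, hb⟩ := hy
  have h1 : q ∣ x * (i * Ks + j * Tb) :=
    ⟨a * Ks + j * b, by linear_combination Ks * ha + j * hb⟩
  have h2 : q ∣ i * Ks + j * Tb := (hxq.symm).dvd_of_dvd_mul_left h1
  obtain ⟨m, hm⟩ := h2
  have hKsTb : IsCoprime Ks Tb := Int.isCoprime_iff_gcd_eq_one.mpr hKsc
  have h3 : Ks ∣ (m * Tb - j) * Tb := ⟨i - m * Ls, by linear_combination -hm - m * hq⟩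
  obtain ⟨n, hn⟩ := hKsTb.dvd_of_dvd_mul_right h3
  have hKs0 : Ks ≠ 0 := by intro h; omega
  have hj' : j = m * Tb - n * Ks := by linarith [hn]
  have hi' : i = m * Ls + n * Tb := by
    have hh : Ks * i = Ks * (m * Ls + n * Tb) := by
      linear_combination hm + Tb * hn + m * hq
    exact mul_left_cancel₀ hKs0 hh
  subst hi' hj' hTb hq
  clear ha hb h1 h3 hn hm hxq hKsTb hx hKsc hLsc hKs0
  clear a b x y
  -- now pure inequalities in m, n
  have hLs0 : (0:ℤ) ≤ Ls := by omega
  have hKs0' : (0:ℤ) ≤ Ks := by omega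
  have hTb0 : (0:ℤ) ≤ T - 1 := by omega
  -- m ≥ 0
  have hm0 : 0 ≤ m := by
    by_contra h
    push_neg at h
    have hm1 : m ≤ -1 := by omega
    rcases le_or_gt n 0 with hn0 | hn1
    · have t1 : m * Ls ≤ -1 * Ls := mul_le_mul_of_nonneg_right hm1 hLs0
      have t2 : n * (T - 1) ≤ 0 * (T - 1) := mul_le_mul_of_nonneg_right hn0 hTb0
      linarith
    · have t1 : m * (T - 1) ≤ -1 * (T - 1) := mul_le_mul_of_nonneg_right hm1 hTb0
      have t2 : 1 * Ks ≤ n * Ks := mul_le_mul_of_nonneg_right hn1 hKs0'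
      linarith
  -- m ≤ 1
  have hm1 : m ≤ 1 := by
    by_contra h
    push_neg at h
    have hm2 : 2 ≤ m := by omega
    have hnneg : n ≤ -1 := by
      by_contra hc
      push_neg at hc
      have hc0 : 0 ≤ n := by omega
      have t1 : 2 * Ls ≤ m * Ls := mul_le_mul_of_nonneg_right hm2 hLs0
      have t2 : 0 * (T - 1) ≤ n * (T - 1) := mul_le_mul_of_nonneg_right hc0 hTb0
      linarith
    have t1 : 2 * (T - 1) ≤ m * (T - 1) := mul_le_mul_of_nonneg_right hm2 hTb0
    have t2 : n * Ks ≤ -1 * Ks := mul_le_mul_of_nonneg_right hnneg hKs0'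
    linarith
  interval_cases m
  · -- m = 0
    have hn0 : 0 ≤ n := by
      by_contra h
      push_neg at h
      have hn1 : n ≤ -1 := by omega
      have t2 : n * Ks ≤ -1 * Ks := mul_le_mul_of_nonneg_right hn1 hKs0'
      linarith
    have hn1 : n ≤ 1 := by
      by_contra h
      push_neg at h
      have hn2 : 2 ≤ n := by omega
      have t2 : 2 * Ks ≤ n * Ks := mul_le_mul_of_nonneg_right hn2 hKs0'
      linarith
    interval_cases n
    · left; constructor <;> ring
    · right; right; constructor <;> ring
  · -- m = 1
    have hn0 : 0 ≤ n := by
      by_contra h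
      push_neg at h
      have hn1 : n ≤ -1 := by omega
      have t2 : n * Ks ≤ -1 * Ks := mul_le_mul_of_nonneg_right hn1 hKs0'
      linarith
    have hn1 : n ≤ 0 := by
      by_contra h
      push_neg at h
      have hn2 : 1 ≤ n := by omega
      have t2 : 1 * (T - 1) ≤ n * (T - 1) := mul_le_mul_of_nonneg_right hn2 hTb0
      linarith
    have : n = 0 := le_antisymm hn1 hn0
    subst this
    right; left; constructor <;> ring
end

section
/- Let q, N, T be positive integers with T ≤ N ≤ q, p a prime with q | p−1, ω ∈ 𝔽_p of order q, and let α_j = b + x·j (mod q) for j = 1, ..., T be an arithmetic progression with common difference x satisfying gcd(x, q) = 1. Then every T×T submatrix of the N×T matrix with (i,j) entry ω^{(i−1)·α_j} (rows indexed by i = 1, ..., N) is invertible. -/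
theorem stmt8 (q N T : ℕ) (hq : 0 < q) (hT : 0 < T) (hTN : T ≤ N) (hNq : N ≤ q)
    (p : ℕ) (hp : p.Prime) (hqp : q ∣ p - 1)
    (ω : ZMod p) (hω : orderOf ω = q)
    (b x : ℤ) (hx : Int.gcd x q = 1)
    (α : Fin T → ℕ) (hα : ∀ j : Fin T, α j = ((b + x * ((j : ℕ) + 1)) % (q : ℤ)).toNat)
    (ρ : Fin T → Fin N) (hρ : Function.Injective ρ) :
    IsUnit (Matrix.of (fun s j : Fin T => ω ^ ((ρ s : ℕ) * α j))) := by
  haveI : Fact p.Prime := ⟨hp⟩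
  have hω0 : ω ≠ 0 := by
    intro h
    have h1 : ω ^ q = 1 := hω ▸ pow_orderOf_eq_one ω
    rw [h, zero_pow hq.ne'] at h1
    exact zero_ne_one h1
  obtain ⟨u, hu⟩ := hω0.isUnit
  have hou : orderOf u = q := by rw [← hω, ← hu, orderOf_units]
  have key : ∀ m n : ℤ, (q : ℤ) ∣ m - n → u ^ m = u ^ n := by
    intro m n hd
    rw [← orderOf_dvd_sub_iff_zpow_eq_zpow, hou]
    exact hd
  have hαcong : ∀ j : Fin T, (q : ℤ) ∣ (α j : ℤ) - (b + x * ((j : ℕ) + 1)) := by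
    intro j
    have : (α j : ℤ) = (b + x * ((j : ℕ) + 1)) % (q : ℤ) := by
      rw [hα j, Int.toNat_of_nonneg (Int.emod_nonneg _ (by exact_mod_cast hq.ne'))]
    rw [this, Int.emod_def]
    exact ⟨-((b + x * ((j : ℕ) + 1)) / q), by ring⟩
  set v : Fin T → ZMod p := fun s => ((u ^ ((ρ s : ℤ) * (b + x)) : (ZMod p)ˣ) : ZMod p) with hv
  set y : Fin T → ZMod p := fun s => ((u ^ ((ρ s : ℤ) * x) : (ZMod p)ˣ) : ZMod p) with hy
  have hM : (Matrix.of (fun s j : Fin T => ω ^ ((ρ s : ℕ) * α j)))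
      = Matrix.of (fun s j : Fin T => v s * Matrix.vandermonde y s j) := by
    ext s j
    simp only [Matrix.of_apply, Matrix.vandermonde_apply, hv, hy]
    have h1 : ω ^ ((ρ s : ℕ) * α j)
        = ((u ^ (((ρ s : ℕ) * α j : ℕ) : ℤ) : (ZMod p)ˣ) : ZMod p) := by
      rw [zpow_natCast, ← hu]
      norm_cast
    rw [h1, ← Units.val_pow_eq_pow_val, ← Units.val_mul, ← zpow_natCast (u ^ ((ρ s : ℤ) * x)),
      ← zpow_mul, ← zpow_add]
    congr 1
    apply key
    have : (ρ s : ℤ) * (b + x) + (ρ s : ℤ) * x * (j : ℕ)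
        = (ρ s : ℤ) * (b + x * ((j : ℕ) + 1)) := by ring
    rw [this]
    have h2 := (hαcong j).mul_left (ρ s : ℤ)
    have h3 : ((((ρ s : ℕ) * α j : ℕ)) : ℤ) - (ρ s : ℤ) * (b + x * ((j : ℕ) + 1))
        = (ρ s : ℤ) * ((α j : ℤ) - (b + x * ((j : ℕ) + 1))) := by push_cast; ring
    rw [h3]
    exact h2
  rw [hM]
  rw [Matrix.isUnit_iff_isUnit_det, isUnit_iff_ne_zero, Matrix.det_mul_column,
    Matrix.det_vandermonde]
  have hyinj : Function.Injective y := by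
    intro s s' hss
    have : (u ^ ((ρ s : ℤ) * x)) = (u ^ ((ρ s' : ℤ) * x)) := Units.ext hss
    have hd : (q : ℤ) ∣ (ρ s : ℤ) * x - (ρ s' : ℤ) * x := by
      rw [← hou, orderOf_dvd_sub_iff_zpow_eq_zpow]
      exact this
    have hcop : IsCoprime (q : ℤ) x := by
      rw [Int.isCoprime_iff_gcd_eq_one, Int.gcd_comm]
      exact hx
    have hd2 : (q : ℤ) ∣ ((ρ s : ℤ) - (ρ s' : ℤ)) := by
      have : (ρ s : ℤ) * x - (ρ s' : ℤ) * x = ((ρ s : ℤ) - (ρ s' : ℤ)) * x := by ring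
      rw [this] at hd
      exact hcop.dvd_of_dvd_mul_right hd
    have habs : |(ρ s : ℤ) - (ρ s' : ℤ)| < (q : ℤ) := by
      rw [abs_sub_lt_iff]
      constructor <;> [skip; skip] <;>
        · have h1 : ((ρ s : ℕ) : ℤ) < N := by exact_mod_cast (ρ s).2
          have h2 : ((ρ s' : ℕ) : ℤ) < N := by exact_mod_cast (ρ s').2
          have h3 : (N : ℤ) ≤ q := by exact_mod_cast hNq
          have h4 : (0 : ℤ) ≤ ((ρ s : ℕ) : ℤ) := Int.ofNat_nonneg _
          have h5 : (0 : ℤ) ≤ ((ρ s' : ℕ) : ℤ) := Int.ofNat_nonneg _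
          omega
    have : (ρ s : ℤ) - (ρ s' : ℤ) = 0 := Int.eq_zero_of_abs_lt_dvd hd2 habs
    have : ρ s = ρ s' := by
      apply Fin.ext
      omega
    exact hρ this
  apply mul_ne_zero
  · apply Finset.prod_ne_zero_iff.mpr
    intro s _
    exact Units.ne_zero _
  · apply Finset.prod_ne_zero_iff.mpr
    intro i _
    apply Finset.prod_ne_zero_iff.mpr
    intro j hj
    exact sub_ne_zero_of_ne fun h => absurd (hyinj h) (Finset.mem_Ioi.mp hj).ne'
end

section
/- Let K, L, T be integers with K, L, T ≥ 2 and K ≥ L ≥ T, set T̄ = T−1, let K*, L* be the smallest integers ≥ K+1, ≥ L+1 coprime to T̄, and q = K*L* + T̄². Let x be coprime to q, y satisfy xT̄ + yK* ≡ 0 (mod q). Define α^p = y·{0,...,K−1}, β^s = y·{0,...,T−1} − x, α^s = x·{0,...,T−1} + K·y, all modulo q. Then (α^p + β^s) mod q and (α^s + β^p) mod q are disjoint, where β^p = x·{0,...,L−1} mod q. -/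
set_option maxHeartbeats 1000000


theorem stmt11 (K L T : ℕ) (hT : 2 ≤ T) (hLT : T ≤ L) (hKL : L ≤ K)
    (Tb : ℕ) (hTb : Tb = T - 1)
    (Ks Ls : ℕ)
    (hKs1 : K + 1 ≤ Ks) (hKsc : Nat.Coprime Ks Tb)
    (hKsmin : ∀ m, K + 1 ≤ m → Nat.Coprime m Tb → Ks ≤ m)
    (hLs1 : L + 1 ≤ Ls) (hLsc : Nat.Coprime Ls Tb)
    (hLsmin : ∀ m, L + 1 ≤ m → Nat.Coprime m Tb → Ls ≤ m)
    (q : ℕ) (hq : q = Ks * Ls + Tb ^ 2)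
    (x y : ℤ) (hx : Int.gcd x q = 1) (hy : (q : ℤ) ∣ x * Tb + y * Ks) :
    Disjoint
      {z : ZMod q | ∃ i < K, ∃ j < T,
        z = (y : ZMod q) * (i : ℕ) + ((y : ZMod q) * (j : ℕ) - (x : ZMod q))}
      {z : ZMod q | ∃ i < T, ∃ j < L,
        z = ((x : ZMod q) * (i : ℕ) + (K : ZMod q) * (y : ZMod q)) + (x : ZMod q) * (j : ℕ)} := by
  rw [Set.disjoint_left]
  rintro z ⟨i, hi, j, hj, rfl⟩ ⟨a, ha, b, hb, heq⟩
  -- integer versions of all hypotheses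
  have hi' : (i : ℤ) < K := by exact_mod_cast hi
  have hj' : (j : ℤ) < T := by exact_mod_cast hj
  have ha' : (a : ℤ) < T := by exact_mod_cast ha
  have hb' : (b : ℤ) < L := by exact_mod_cast hb
  have hT' : (2 : ℤ) ≤ T := by exact_mod_cast hT
  have hLT' : (T : ℤ) ≤ L := by exact_mod_cast hLT
  have hKL' : (L : ℤ) ≤ K := by exact_mod_cast hKL
  have hKs1' : (K : ℤ) + 1 ≤ Ks := by exact_mod_cast hKs1
  have hLs1' : (L : ℤ) + 1 ≤ Ls := by exact_mod_cast hLs1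
  have hTb' : (Tb : ℤ) = (T : ℤ) - 1 := by omega
  have hq' : (q : ℤ) = Ks * Ls + Tb ^ 2 := by exact_mod_cast hq
  have hq0 : (0 : ℤ) < q := by nlinarith
  have h1 : (((x * a + K * y + x * b) - (y * i + y * j - x) : ℤ) : ZMod q) = 0 := by
    push_cast
    linear_combination -heq
  have h2 : (q : ℤ) ∣ (x * a + K * y + x * b) - (y * i + y * j - x) := by
    rwa [ZMod.intCast_zmod_eq_zero_iff_dvd] at h1
  obtain ⟨u, hu⟩ := h2
  obtain ⟨t, ht⟩ := hy
  have hxD : (q : ℤ) ∣ x * ((Ks : ℤ) * ((a : ℤ) + b + 1) - (Tb : ℤ) * ((K : ℤ) - ((i : ℤ) + j))) :=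
    ⟨(Ks : ℤ) * u + t * ((i : ℤ) + j - K), by
      linear_combination (Ks : ℤ) * hu + ((i : ℤ) + (j : ℤ) - (K : ℤ)) * ht⟩
  have hcopx : IsCoprime (q : ℤ) x := by
    rw [Int.isCoprime_iff_gcd_eq_one, Int.gcd_comm]
    exact hx
  obtain ⟨c, hc⟩ := hcopx.dvd_of_dvd_mul_left hxD
  have hcopKT : IsCoprime (Ks : ℤ) (Tb : ℤ) := Nat.isCoprime_iff_coprime.mpr hKsc
  have hKs0 : (Ks : ℤ) ≠ 0 := by omega
  clear hx hKsmin hLsmin heq h1 hu ht hxD hcopx hq hTb hKs1 hLs1 hi hj ha hb hT hLT hKL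
  have hi0 : (0:ℤ) ≤ i := Int.natCast_nonneg i
  have hj0 : (0:ℤ) ≤ j := Int.natCast_nonneg j
  have ha0 : (0:ℤ) ≤ a := Int.natCast_nonneg a
  have hb0 : (0:ℤ) ≤ b := Int.natCast_nonneg b
  have hTb1 : (1:ℤ) ≤ Tb := by linarith
  -- bounds on D
  have p1 : (Tb:ℤ) * ((K:ℤ) - ((i:ℤ) + j)) ≤ (Tb:ℤ) * K := by nlinarith [mul_nonneg (by linarith : (0:ℤ) ≤ (Tb:ℤ)) (by linarith : (0:ℤ) ≤ (i:ℤ) + j)]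
  have p2 : (Tb:ℤ) * K ≤ (Ls:ℤ) * Ks := by nlinarith [mul_le_mul (by linarith : (Tb:ℤ) ≤ Ls) (by linarith : (K:ℤ) ≤ Ks) (by linarith : (0:ℤ) ≤ (K:ℤ)) (by linarith : (0:ℤ) ≤ (Ls:ℤ))]
  have p3 : (Ks:ℤ) * 1 ≤ (Ks:ℤ) * ((a:ℤ) + b + 1) := by nlinarith [mul_nonneg (by linarith : (0:ℤ) ≤ (Ks:ℤ)) (by linarith : (0:ℤ) ≤ (a:ℤ) + b)]
  have p4 : (Ks:ℤ) * ((a:ℤ) + b + 1) ≤ (Ks:ℤ) * ((Tb:ℤ) + L) := by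
    have h5 : (a:ℤ) + b + 1 ≤ (Tb:ℤ) + L := by linarith
    nlinarith [mul_nonneg (by linarith : (0:ℤ) ≤ (Ks:ℤ)) (by linarith : (0:ℤ) ≤ (Tb:ℤ) + L - ((a:ℤ) + b + 1))]
  have p5 : (Ks:ℤ) * ((Tb:ℤ) + L) ≤ (Ks:ℤ) * Ls + (Ks:ℤ) * Ls := by
    nlinarith [mul_nonneg (by linarith : (0:ℤ) ≤ (Ks:ℤ)) (by linarith : (0:ℤ) ≤ 2*(Ls:ℤ) - (Tb:ℤ) - L)]
  have p6 : (Tb:ℤ) * ((K:ℤ) - ((i:ℤ) + j)) ≥ (Tb:ℤ) * (1 - (Tb:ℤ)) := by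
    nlinarith [mul_nonneg (by linarith : (0:ℤ) ≤ (Tb:ℤ)) (by linarith : (0:ℤ) ≤ (K:ℤ) - ((i:ℤ) + j) - (1 - (Tb:ℤ)))]
  have hD1 : -(q : ℤ) < (Ks : ℤ) * ((a : ℤ) + b + 1) - (Tb : ℤ) * ((K : ℤ) - ((i : ℤ) + j)) := by
    nlinarith [sq_nonneg ((Tb:ℤ))]
  have hD2 : (Ks : ℤ) * ((a : ℤ) + b + 1) - (Tb : ℤ) * ((K : ℤ) - ((i : ℤ) + j)) < 2 * q := by
    nlinarith [sq_nonneg ((Tb:ℤ) - 1)]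
  have hc01 : c = 0 ∨ c = 1 := by
    have e2 : (q:ℤ) * c < (q:ℤ) * 2 := by linarith
    have e0 : (q:ℤ) * (-1) < (q:ℤ) * c := by linarith
    have h2' : c < 2 := lt_of_mul_lt_mul_left e2 (le_of_lt hq0)
    have h0' : -1 < c := lt_of_mul_lt_mul_left e0 (le_of_lt hq0)
    omega
  rcases hc01 with rfl | rfl
  · -- D = 0
    rw [mul_zero] at hc
    have hdvd : (Ks : ℤ) ∣ (K : ℤ) - (i + j) :=
      hcopKT.dvd_of_dvd_mul_left ⟨(a : ℤ) + b + 1, by linear_combination -hc⟩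
    obtain ⟨d, hd⟩ := hdvd
    have hcan : (a : ℤ) + b + 1 = Tb * d := by
      have hKs0' : (Ks : ℤ) ≠ 0 := hKs0
      apply mul_left_cancel₀ hKs0'
      linear_combination hc + (Tb : ℤ) * hd
    have hd1 : 1 ≤ d := by
      by_contra h
      push_neg at h
      have : (Tb:ℤ) * d ≤ 0 := mul_nonpos_of_nonneg_of_nonpos (by linarith) (by linarith)
      linarith
    have : (Ks:ℤ) * 1 ≤ (Ks:ℤ) * d := mul_le_mul_of_nonneg_left hd1 (by linarith)
    linarith
  · -- D = q
    rw [mul_one] at hc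
    have hdvd : (Ks : ℤ) ∣ (K : ℤ) - (i + j) + Tb :=
      hcopKT.dvd_of_dvd_mul_left ⟨(a : ℤ) + b + 1 - Ls, by linear_combination -hc - hq'⟩
    obtain ⟨d, hd⟩ := hdvd
    have hcan : (a : ℤ) + b + 1 - Ls = Tb * d := by
      have hKs0' : (Ks : ℤ) ≠ 0 := hKs0
      apply mul_left_cancel₀ hKs0'
      linear_combination hc + hq' + (Tb : ℤ) * hd
    have hKM : (1 : ℤ) ≤ (K : ℤ) - (i + j) + Tb := by linarith
    have hd1 : 1 ≤ d := by
      by_contra h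
      push_neg at h
      have : (Ks:ℤ) * d ≤ 0 := mul_nonpos_of_nonneg_of_nonpos (by linarith) (by linarith)
      linarith
    have : (Tb:ℤ) * 1 ≤ (Tb:ℤ) * d := mul_le_mul_of_nonneg_left hd1 (by linarith)
    linarith
end

section
/- Under the CATₓ construction with parameters K ≥ L ≥ T ≥ 2, the quadrant sets satisfy |TL| = KL, |TR| = K+T−1, |BL| = L+T−1, and |BR| = T², where TL = α^p + β^p, TR = α^p + β^s, BL = α^s + β^p, BR = α^s + β^s, with all additions modulo q. -/
set_option maxHeartbeats 2000000 in
lemma cat_key (K L T Tb Ks Ls q : ℕ) (hT : 2 ≤ T) (hLT : T ≤ L) (hKL : L ≤ K)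
    (hTb : Tb = T - 1) (hKs1 : K + 1 ≤ Ks) (hKsc : Nat.Coprime Ks Tb)
    (hLs1 : L + 1 ≤ Ls) (hq : q = Ks * Ls + Tb ^ 2)
    (a b : ℤ) (ha : |a| ≤ (K : ℤ) - 1) (hb : |b| ≤ (L : ℤ) - 1)
    (hd : (q : ℤ) ∣ (Ks : ℤ) * b - (Tb : ℤ) * a) : a = 0 ∧ b = 0 := by
  have hTb1 : 1 ≤ Tb := by omega
  have hqZ : (q : ℤ) = (Ks : ℤ) * Ls + (Tb : ℤ) ^ 2 := by exact_mod_cast congrArg (Nat.cast : ℕ → ℤ) hq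
  have hKsZ : (K : ℤ) + 1 ≤ Ks := by exact_mod_cast hKs1
  have hLsZ : (L : ℤ) + 1 ≤ Ls := by exact_mod_cast hLs1
  have hTbZ : (Tb : ℤ) ≤ (L : ℤ) - 1 := by
    have h1 : Tb + 1 ≤ L := by omega
    have : (Tb : ℤ) + 1 ≤ L := by exact_mod_cast h1
    linarith
  have hTb1Z : (1 : ℤ) ≤ Tb := by exact_mod_cast hTb1
  have hLZ : (2 : ℤ) ≤ L := by exact_mod_cast (le_trans hT hLT)
  have hKZ : (L : ℤ) ≤ K := by exact_mod_cast hKL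
  have cop : IsCoprime (Ks : ℤ) (Tb : ℤ) := by
    rw [Int.isCoprime_iff_gcd_eq_one, Int.gcd_natCast_natCast]; exact hKsc
  obtain ⟨ha1, ha2⟩ := abs_le.mp ha
  obtain ⟨hb1, hb2⟩ := abs_le.mp hb
  have hKspos : (0 : ℤ) < Ks := by linarith
  have hTbpos : (0 : ℤ) < Tb := by linarith
  have hqposN : 0 < q := by
    have := Nat.mul_pos (show 0 < Ks by omega) (show 0 < Ls by omega)
    omega
  have hqpos : (0 : ℤ) < q := by exact_mod_cast hqposN
  obtain ⟨c, hc⟩ := hd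
  have hub1 : (Ks : ℤ) * b ≤ Ks * ((L : ℤ) - 1) := mul_le_mul_of_nonneg_left hb2 hKspos.le
  have hub2 : (Ks : ℤ) * (-((L : ℤ) - 1)) ≤ Ks * b := mul_le_mul_of_nonneg_left hb1 hKspos.le
  have hub3 : (Tb : ℤ) * a ≤ Tb * ((K : ℤ) - 1) := mul_le_mul_of_nonneg_left ha2 hTbpos.le
  have hub4 : (Tb : ℤ) * (-((K : ℤ) - 1)) ≤ Tb * a := mul_le_mul_of_nonneg_left ha1 hTbpos.le
  have hM : (Ks : ℤ) * ((L : ℤ) - 1) + (Tb : ℤ) * ((K : ℤ) - 1) < 2 * q := by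
    have h4 : (Ks : ℤ) * ((L : ℤ) - 1) ≤ Ks * ((Ls : ℤ) - 2) :=
      mul_le_mul_of_nonneg_left (by linarith) hKspos.le
    have h5 : (Tb : ℤ) * ((K : ℤ) - 1) ≤ ((L : ℤ) - 1) * ((K : ℤ) - 1) :=
      mul_le_mul_of_nonneg_right hTbZ (by linarith)
    have h6 : ((L : ℤ) - 1) * ((K : ℤ) - 1) ≤ ((L : ℤ) - 1) * Ks :=
      mul_le_mul_of_nonneg_left (by linarith) (by linarith)
    have h7 : ((L : ℤ) - 1) * Ks < Ls * Ks :=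
      mul_lt_mul_of_pos_right (by linarith) hKspos
    have h8 : (0 : ℤ) ≤ (Tb : ℤ) ^ 2 := sq_nonneg _
    nlinarith [h4, h5, h6, h7, h8]
  have hclt : c < 2 := by
    have h1 : (q : ℤ) * c < q * 2 := by rw [← hc]; linarith
    exact (mul_lt_mul_iff_right₀ hqpos).mp h1
  have hcgt : -2 < c := by
    have h1 : (q : ℤ) * (-2) < q * c := by rw [← hc]; linarith
    exact (mul_lt_mul_iff_right₀ hqpos).mp h1
  have hcases : c = -1 ∨ c = 0 ∨ c = 1 := by omega
  rcases hcases with rfl | rfl | rfl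
  · -- c = -1 : Ks*(b + Ls) = Tb*(a - Tb)
    exfalso
    have hdvd : (Ks : ℤ) ∣ (Tb : ℤ) * (a - Tb) := ⟨b + Ls, by linear_combination -hc + hqZ⟩
    obtain ⟨e, he⟩ := cop.dvd_of_dvd_mul_left hdvd
    have he1 : -2 < e := by
      have h1 : (Ks : ℤ) * (-2) < Ks * e := by rw [← he]; linarith
      exact (mul_lt_mul_iff_right₀ hKspos).mp h1
    have he2 : e < 1 := by
      have h1 : (Ks : ℤ) * e < Ks * 1 := by rw [← he]; linarith
      exact (mul_lt_mul_iff_right₀ hKspos).mp h1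
    interval_cases e
    · -- a - Tb = -Ks
      have h0 : (Ks : ℤ) * (b + Ls + Tb) = 0 := by linear_combination hc - hqZ + (Tb : ℤ) * he
      have : b + Ls + Tb = 0 := by
        rcases mul_eq_zero.mp h0 with h | h
        · exact absurd h hKspos.ne'
        · exact h
      linarith
    · -- a = Tb
      have h0 : (Ks : ℤ) * (b + Ls) = 0 := by linear_combination hc - hqZ + (Tb : ℤ) * he
      have : b + Ls = 0 := by
        rcases mul_eq_zero.mp h0 with h | h
        · exact absurd h hKspos.ne'
        · exact h
      linarith
  · -- c = 0
    have h0 : (Ks : ℤ) * b = (Tb : ℤ) * a := by linear_combination hc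
    have hdvd : (Ks : ℤ) ∣ (Tb : ℤ) * a := ⟨b, h0.symm⟩
    obtain ⟨e, he⟩ := cop.dvd_of_dvd_mul_left hdvd
    have he1 : -1 < e := by
      have h1 : (Ks : ℤ) * (-1) < Ks * e := by rw [← he]; linarith
      exact (mul_lt_mul_iff_right₀ hKspos).mp h1
    have he2 : e < 1 := by
      have h1 : (Ks : ℤ) * e < Ks * 1 := by rw [← he]; linarith
      exact (mul_lt_mul_iff_right₀ hKspos).mp h1
    interval_cases e
    have ha0 : a = 0 := by rw [he]; ring
    refine ⟨ha0, ?_⟩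
    have hz : (Ks : ℤ) * b = 0 := by rw [h0, ha0]; ring
    rcases mul_eq_zero.mp hz with h | h
    · exact absurd h hKspos.ne'
    · exact h
  · -- c = 1 : Ks*(b - Ls) = Tb*(a + Tb)
    exfalso
    have hdvd : (Ks : ℤ) ∣ (Tb : ℤ) * (a + Tb) := ⟨b - Ls, by linear_combination -hc - hqZ⟩
    obtain ⟨e, he⟩ := cop.dvd_of_dvd_mul_left hdvd
    have he1 : -1 < e := by
      have h1 : (Ks : ℤ) * (-1) < Ks * e := by rw [← he]; linarith
      exact (mul_lt_mul_iff_right₀ hKspos).mp h1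
    have he2 : e < 2 := by
      have h1 : (Ks : ℤ) * e < Ks * 2 := by rw [← he]; linarith
      exact (mul_lt_mul_iff_right₀ hKspos).mp h1
    interval_cases e
    · -- a = -Tb
      have h0 : (Ks : ℤ) * (b - Ls) = 0 := by linear_combination hc + hqZ + (Tb : ℤ) * he
      have : b - Ls = 0 := by
        rcases mul_eq_zero.mp h0 with h | h
        · exact absurd h hKspos.ne'
        · exact h
      linarith
    · -- a + Tb = Ks
      have h0 : (Ks : ℤ) * (b - Ls - Tb) = 0 := by linear_combination hc + hqZ + (Tb : ℤ) * he
      have : b - Ls - Tb = 0 := by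
        rcases mul_eq_zero.mp h0 with h | h
        · exact absurd h hKspos.ne'
        · exact h
      linarith

lemma cat_reduce (q Ks Tb : ℕ) (x y : ℤ) (hx : Int.gcd x q = 1)
    (hy : (q : ℤ) ∣ x * Tb + y * Ks) (a b : ℤ) (h : (q : ℤ) ∣ y * a + x * b) :
    (q : ℤ) ∣ (Ks : ℤ) * b - (Tb : ℤ) * a := by
  have copx : IsCoprime (q : ℤ) x := by
    rw [Int.isCoprime_iff_gcd_eq_one, Int.gcd_comm]; exact hx
  have h1 : (q : ℤ) ∣ x * ((Ks : ℤ) * b - (Tb : ℤ) * a) := by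
    have h2 := Dvd.dvd.mul_left h (Ks : ℤ)
    have h3 := Dvd.dvd.mul_left hy a
    have h4 : (q : ℤ) ∣ ((Ks : ℤ) * (y * a + x * b) - a * (x * Tb + y * Ks)) := dvd_sub h2 h3
    convert h4 using 1; ring
  exact copx.dvd_of_dvd_mul_left h1

lemma cat_bound1 (K L T Tb Ks Ls q : ℕ) (hT : 2 ≤ T) (hLT : T ≤ L) (hKL : L ≤ K)
    (hTb : Tb = T - 1) (hKs1 : K + 1 ≤ Ks) (hLs1 : L + 1 ≤ Ls) (hq : q = Ks * Ls + Tb ^ 2)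
    (s : ℤ) (hs : |s| ≤ (K : ℤ) + T - 2) (hd : (q : ℤ) ∣ (Tb : ℤ) * s) : s = 0 := by
  have hqZ : (q : ℤ) = (Ks : ℤ) * Ls + (Tb : ℤ) ^ 2 := by exact_mod_cast congrArg (Nat.cast : ℕ → ℤ) hq
  have hKsZ : (K : ℤ) + 1 ≤ Ks := by exact_mod_cast hKs1
  have hLsZ : (L : ℤ) + 1 ≤ Ls := by exact_mod_cast hLs1
  have hLZ : (2 : ℤ) ≤ L := by exact_mod_cast (le_trans hT hLT)
  have hKZ : (L : ℤ) ≤ K := by exact_mod_cast hKL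
  have hTZ : (2 : ℤ) ≤ T := by exact_mod_cast hT
  have hTLZ : (T : ℤ) ≤ L := by exact_mod_cast hLT
  have hTbT : (Tb : ℤ) = (T : ℤ) - 1 := by
    have h1 : Tb + 1 = T := by omega
    have h2 : (Tb : ℤ) + 1 = T := by exact_mod_cast h1
    linarith
  have hTbpos : (0 : ℤ) < Tb := by linarith
  have hKspos : (0 : ℤ) < Ks := by linarith
  have habs : |(Tb : ℤ) * s| < q := by
    rw [abs_mul, abs_of_nonneg hTbpos.le]
    have h2 : (Tb : ℤ) * |s| ≤ Tb * ((K : ℤ) + T - 2) :=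
      mul_le_mul_of_nonneg_left hs hTbpos.le
    have h4 : (Tb : ℤ) * ((K : ℤ) - 1) ≤ ((L : ℤ) - 1) * ((K : ℤ) - 1) :=
      mul_le_mul_of_nonneg_right (by linarith) (by linarith)
    have h5 : ((L : ℤ) - 1) * ((K : ℤ) - 1) ≤ ((L : ℤ) - 1) * Ks :=
      mul_le_mul_of_nonneg_left (by linarith) (by linarith)
    have h6 : ((L : ℤ) - 1) * Ks < Ls * Ks :=
      mul_lt_mul_of_pos_right (by linarith) hKspos
    nlinarith [h2, h4, h5, h6]
  have hz := Int.eq_zero_of_abs_lt_dvd hd habs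
  rcases mul_eq_zero.mp hz with h | h
  · exact absurd h hTbpos.ne'
  · exact h

lemma cat_bound2 (K L T Tb Ks Ls q : ℕ) (hT : 2 ≤ T) (hLT : T ≤ L) (hKL : L ≤ K)
    (hKs1 : K + 1 ≤ Ks) (hLs1 : L + 1 ≤ Ls) (hq : q = Ks * Ls + Tb ^ 2)
    (s : ℤ) (hs : |s| ≤ (L : ℤ) + T - 2) (hd : (q : ℤ) ∣ s) : s = 0 := by
  have hqZ : (q : ℤ) = (Ks : ℤ) * Ls + (Tb : ℤ) ^ 2 := by exact_mod_cast congrArg (Nat.cast : ℕ → ℤ) hq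
  have hKsZ : (K : ℤ) + 1 ≤ Ks := by exact_mod_cast hKs1
  have hLsZ : (L : ℤ) + 1 ≤ Ls := by exact_mod_cast hLs1
  have hLZ : (2 : ℤ) ≤ L := by exact_mod_cast (le_trans hT hLT)
  have hKZ : (L : ℤ) ≤ K := by exact_mod_cast hKL
  have hTLZ : (T : ℤ) ≤ L := by exact_mod_cast hLT
  have hprod : ((K : ℤ) + 1) * ((L : ℤ) + 1) ≤ (Ks : ℤ) * Ls :=
    mul_le_mul hKsZ hLsZ (by linarith) (by linarith)
  have habs : |s| < q := by
    nlinarith [hprod, sq_nonneg (Tb : ℤ)]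
  exact Int.eq_zero_of_abs_lt_dvd hd habs

theorem stmt13 (K L T : ℕ) (hT : 2 ≤ T) (hLT : T ≤ L) (hKL : L ≤ K)
    (Tb : ℕ) (hTb : Tb = T - 1)
    (Ks Ls : ℕ)
    (hKs1 : K + 1 ≤ Ks) (hKsc : Nat.Coprime Ks Tb)
    (hKsmin : ∀ m, K + 1 ≤ m → Nat.Coprime m Tb → Ks ≤ m)
    (hLs1 : L + 1 ≤ Ls) (hLsc : Nat.Coprime Ls Tb)
    (hLsmin : ∀ m, L + 1 ≤ m → Nat.Coprime m Tb → Ls ≤ m)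
    (q : ℕ) (hq : q = Ks * Ls + Tb ^ 2)
    (x y : ℤ) (hx : Int.gcd x q = 1) (hy : (q : ℤ) ∣ x * Tb + y * Ks) :
    {z : ZMod q | ∃ i < K, ∃ j < L,
        z = (y : ZMod q) * (i : ℕ) + (x : ZMod q) * (j : ℕ)}.ncard = K * L ∧
    {z : ZMod q | ∃ i < K, ∃ j < T,
        z = (y : ZMod q) * (i : ℕ) + ((y : ZMod q) * (j : ℕ) - (x : ZMod q))}.ncard
      = K + T - 1 ∧
    {z : ZMod q | ∃ i < T, ∃ j < L,
        z = ((x : ZMod q) * (i : ℕ) + (K : ZMod q) * (y : ZMod q))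
          + (x : ZMod q) * (j : ℕ)}.ncard = L + T - 1 ∧
    {z : ZMod q | ∃ i < T, ∃ j < T,
        z = ((x : ZMod q) * (i : ℕ) + (K : ZMod q) * (y : ZMod q))
          + ((y : ZMod q) * (j : ℕ) - (x : ZMod q))}.ncard = T ^ 2 := by
  have copx : IsCoprime (q : ℤ) x := by
    rw [Int.isCoprime_iff_gcd_eq_one, Int.gcd_comm]; exact hx
  refine ⟨?_, ?_, ?_, ?_⟩
  · -- TL
    have hset : {z : ZMod q | ∃ i < K, ∃ j < L,
        z = (y : ZMod q) * (i : ℕ) + (x : ZMod q) * (j : ℕ)}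
        = ↑((Finset.range K ×ˢ Finset.range L).image
            (fun p : ℕ × ℕ => (y : ZMod q) * (p.1 : ℕ) + (x : ZMod q) * (p.2 : ℕ))) := by
      ext z
      simp only [Set.mem_setOf_eq, Finset.coe_image, Set.mem_image, Finset.mem_coe,
        Finset.mem_product, Finset.mem_range]
      constructor
      · rintro ⟨i, hi, j, hj, rfl⟩; exact ⟨(i, j), ⟨hi, hj⟩, rfl⟩
      · rintro ⟨⟨i, j⟩, ⟨hi, hj⟩, rfl⟩; exact ⟨i, hi, j, hj, rfl⟩
    have hinj : Set.InjOn
        (fun p : ℕ × ℕ => (y : ZMod q) * (p.1 : ℕ) + (x : ZMod q) * (p.2 : ℕ))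
        ↑(Finset.range K ×ˢ Finset.range L) := by
      rintro ⟨i, j⟩ hij ⟨i', j'⟩ hij' h
      simp only [Finset.mem_coe, Finset.mem_product, Finset.mem_range] at hij hij'
      simp only at h
      have h0 : ((y * ((i : ℤ) - i') + x * ((j : ℤ) - j') : ℤ) : ZMod q) = 0 := by
        push_cast
        linear_combination h
      have hdvd := (ZMod.intCast_zmod_eq_zero_iff_dvd _ q).mp h0
      have hkey := cat_key K L T Tb Ks Ls q hT hLT hKL hTb hKs1 hKsc hLs1 hq
          ((i : ℤ) - i') ((j : ℤ) - j')
          (by rw [abs_le]; constructor <;> omega)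
          (by rw [abs_le]; constructor <;> omega)
          (cat_reduce q Ks Tb x y hx hy _ _ hdvd)
      obtain ⟨e1, e2⟩ := hkey
      simp only [Prod.mk.injEq]
      omega
    rw [hset, Set.ncard_coe_finset, Finset.card_image_of_injOn hinj,
      Finset.card_product, Finset.card_range, Finset.card_range]
  · -- TR
    have hset : {z : ZMod q | ∃ i < K, ∃ j < T,
        z = (y : ZMod q) * (i : ℕ) + ((y : ZMod q) * (j : ℕ) - (x : ZMod q))}
        = ↑((Finset.range (K + T - 1)).image
            (fun s : ℕ => (y : ZMod q) * (s : ℕ) - (x : ZMod q))) := by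
      ext z
      simp only [Set.mem_setOf_eq, Finset.coe_image, Set.mem_image, Finset.mem_coe,
        Finset.mem_range]
      constructor
      · rintro ⟨i, hi, j, hj, rfl⟩
        exact ⟨i + j, by omega, by push_cast; ring⟩
      · rintro ⟨s, hs, rfl⟩
        refine ⟨min s (K - 1), by omega, s - min s (K - 1), by omega, ?_⟩
        have h : min s (K - 1) + (s - min s (K - 1)) = s := by omega
        conv_lhs => rw [← h]
        push_cast
        ring
    have hinj : Set.InjOn (fun s : ℕ => (y : ZMod q) * (s : ℕ) - (x : ZMod q))
        ↑(Finset.range (K + T - 1)) := by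
      intro s hs s' hs' h
      simp only [Finset.mem_coe, Finset.mem_range] at hs hs'
      simp only at h
      have h0 : ((y * ((s : ℤ) - s') : ℤ) : ZMod q) = 0 := by
        push_cast
        linear_combination h
      have hdvd := (ZMod.intCast_zmod_eq_zero_iff_dvd _ q).mp h0
      have hdvd2 : (q : ℤ) ∣ y * ((s : ℤ) - s') + x * 0 := by simpa using hdvd
      have hred := cat_reduce q Ks Tb x y hx hy _ _ hdvd2
      have hred2 : (q : ℤ) ∣ (Tb : ℤ) * ((s : ℤ) - s') := by
        have h1 : (Ks : ℤ) * 0 - (Tb : ℤ) * ((s : ℤ) - s') = -((Tb : ℤ) * ((s : ℤ) - s')) := by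
          ring
        rw [h1] at hred
        exact (dvd_neg).mp hred
      have hz := cat_bound1 K L T Tb Ks Ls q hT hLT hKL hTb hKs1 hLs1 hq _
          (by rw [abs_le]; constructor <;> omega) hred2
      omega
    rw [hset, Set.ncard_coe_finset, Finset.card_image_of_injOn hinj, Finset.card_range]
  · -- BL
    have hset : {z : ZMod q | ∃ i < T, ∃ j < L,
        z = ((x : ZMod q) * (i : ℕ) + (K : ZMod q) * (y : ZMod q)) + (x : ZMod q) * (j : ℕ)}
        = ↑((Finset.range (L + T - 1)).image
            (fun s : ℕ => (x : ZMod q) * (s : ℕ) + (K : ZMod q) * (y : ZMod q))) := by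
      ext z
      simp only [Set.mem_setOf_eq, Finset.coe_image, Set.mem_image, Finset.mem_coe,
        Finset.mem_range]
      constructor
      · rintro ⟨i, hi, j, hj, rfl⟩
        exact ⟨i + j, by omega, by push_cast; ring⟩
      · rintro ⟨s, hs, rfl⟩
        refine ⟨min s (T - 1), by omega, s - min s (T - 1), by omega, ?_⟩
        have h : min s (T - 1) + (s - min s (T - 1)) = s := by omega
        conv_lhs => rw [← h]
        push_cast
        ring
    have hinj : Set.InjOn
        (fun s : ℕ => (x : ZMod q) * (s : ℕ) + (K : ZMod q) * (y : ZMod q))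
        ↑(Finset.range (L + T - 1)) := by
      intro s hs s' hs' h
      simp only [Finset.mem_coe, Finset.mem_range] at hs hs'
      simp only at h
      have h0 : ((x * ((s : ℤ) - s') : ℤ) : ZMod q) = 0 := by
        push_cast
        linear_combination h
      have hdvd := (ZMod.intCast_zmod_eq_zero_iff_dvd _ q).mp h0
      have hdvd2 : (q : ℤ) ∣ (s : ℤ) - s' := copx.dvd_of_dvd_mul_left hdvd
      have hz := cat_bound2 K L T Tb Ks Ls q hT hLT hKL hKs1 hLs1 hq _
          (by rw [abs_le]; constructor <;> omega) hdvd2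
      omega
    rw [hset, Set.ncard_coe_finset, Finset.card_image_of_injOn hinj, Finset.card_range]
  · -- BR
    have hset : {z : ZMod q | ∃ i < T, ∃ j < T,
        z = ((x : ZMod q) * (i : ℕ) + (K : ZMod q) * (y : ZMod q))
          + ((y : ZMod q) * (j : ℕ) - (x : ZMod q))}
        = ↑((Finset.range T ×ˢ Finset.range T).image
            (fun p : ℕ × ℕ => ((x : ZMod q) * (p.1 : ℕ) + (K : ZMod q) * (y : ZMod q))
              + ((y : ZMod q) * (p.2 : ℕ) - (x : ZMod q)))) := by
      ext z
      simp only [Set.mem_setOf_eq, Finset.coe_image, Set.mem_image, Finset.mem_coe,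
        Finset.mem_product, Finset.mem_range]
      constructor
      · rintro ⟨i, hi, j, hj, rfl⟩; exact ⟨(i, j), ⟨hi, hj⟩, rfl⟩
      · rintro ⟨⟨i, j⟩, ⟨hi, hj⟩, rfl⟩; exact ⟨i, hi, j, hj, rfl⟩
    have hinj : Set.InjOn
        (fun p : ℕ × ℕ => ((x : ZMod q) * (p.1 : ℕ) + (K : ZMod q) * (y : ZMod q))
          + ((y : ZMod q) * (p.2 : ℕ) - (x : ZMod q)))
        ↑(Finset.range T ×ˢ Finset.range T) := by
      rintro ⟨i, j⟩ hij ⟨i', j'⟩ hij' h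
      simp only [Finset.mem_coe, Finset.mem_product, Finset.mem_range] at hij hij'
      simp only at h
      have h0 : ((y * ((j : ℤ) - j') + x * ((i : ℤ) - i') : ℤ) : ZMod q) = 0 := by
        push_cast
        linear_combination h
      have hdvd := (ZMod.intCast_zmod_eq_zero_iff_dvd _ q).mp h0
      have hkey := cat_key K L T Tb Ks Ls q hT hLT hKL hTb hKs1 hKsc hLs1 hq
          ((j : ℤ) - j') ((i : ℤ) - i')
          (by rw [abs_le]; constructor <;> omega)
          (by rw [abs_le]; constructor <;> omega)
          (cat_reduce q Ks Tb x y hx hy _ _ hdvd)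
      obtain ⟨e1, e2⟩ := hkey
      simp only [Prod.mk.injEq]
      omega
    rw [hset, Set.ncard_coe_finset, Finset.card_image_of_injOn hinj,
      Finset.card_product, Finset.card_range]
    exact (pow_two T).symm
end

section
/- Under the CATₓ construction with parameters K ≥ L ≥ T ≥ 2, it holds that |TR ∩ BR| = 2(T−1) − κ and |BL ∩ BR| = 2(T−1) − λ, where κ, λ are the smallest non-negative integers such that K+1+κ and L+1+λ are coprime to T−1. -/
set_option maxHeartbeats 4000000


theorem stmt14 (K L T : ℕ) (hT : 2 ≤ T) (hLT : T ≤ L) (hKL : L ≤ K)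
    (κ lam : ℕ)
    (hκ : Nat.Coprime (K + 1 + κ) (T - 1)) (hκmin : ∀ m < κ, ¬ Nat.Coprime (K + 1 + m) (T - 1))
    (hlam : Nat.Coprime (L + 1 + lam) (T - 1))
    (hlammin : ∀ m < lam, ¬ Nat.Coprime (L + 1 + m) (T - 1))
    (q : ℕ) (hq : q = (K + 1 + κ) * (L + 1 + lam) + (T - 1) ^ 2)
    (x y : ℤ) (hx : Int.gcd x q = 1) (hy : (q : ℤ) ∣ x * (T - 1 : ℕ) + y * (K + 1 + κ : ℕ)) :
    ({z : ZMod q | ∃ i < K, ∃ j < T,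
        z = (y : ZMod q) * (i : ℕ) + ((y : ZMod q) * (j : ℕ) - (x : ZMod q))} ∩
     {z : ZMod q | ∃ i < T, ∃ j < T,
        z = ((x : ZMod q) * (i : ℕ) + (K : ZMod q) * (y : ZMod q))
          + ((y : ZMod q) * (j : ℕ) - (x : ZMod q))}).ncard = 2 * (T - 1) - κ ∧
    ({z : ZMod q | ∃ i < T, ∃ j < L,
        z = ((x : ZMod q) * (i : ℕ) + (K : ZMod q) * (y : ZMod q)) + (x : ZMod q) * (j : ℕ)} ∩
     {z : ZMod q | ∃ i < T, ∃ j < T,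
        z = ((x : ZMod q) * (i : ℕ) + (K : ZMod q) * (y : ZMod q))
          + ((y : ZMod q) * (j : ℕ) - (x : ZMod q))}).ncard = 2 * (T - 1) - lam := by
  set Tb := T - 1 with hTbdef
  set Ks := K + 1 + κ with hKsdef
  set Ls := L + 1 + lam with hLsdef
  have h1Tb : 1 ≤ Tb := by omega
  have hT1 : T = Tb + 1 := by omega
  have hTbL : Tb < L := by omega
  have hTbK : Tb < K := by omega
  have hLsge : Tb + 2 ≤ Ls := by omega
  -- q is big
  have hKL1 : (K+1) * (L+1) ≤ Ks * Ls := Nat.mul_le_mul (by omega) (by omega)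
  have hqbig : K + L + 1 < q := by
    have h2 : (K+1)*(L+1) = K*L + K + L + 1 := by ring
    have h3 : 0 < K * L := Nat.mul_pos (by omega) (by omega)
    omega
  have hq0 : 0 < q := by omega
  haveI : NeZero q := ⟨by omega⟩
  -- basic coprimality / divisibility facts over ℤ
  have hxq : IsCoprime (q:ℤ) x := (Int.isCoprime_iff_gcd_eq_one.mpr (by
    rw [Int.gcd_comm]; exact hx)).symm.symm
  have hcx : ∀ a : ℤ, (q:ℤ) ∣ x * a → (q:ℤ) ∣ a := fun a ha => hxq.dvd_of_dvd_mul_left ha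
  have hTbqN : Nat.Coprime Tb q := by
    rw [hq]
    have h1 : Nat.Coprime Tb (Ks * Ls) := (hκ.symm).mul_right (hlam.symm)
    have h2 : (Tb:ℕ)^2 = Tb * Tb := sq Tb ▸ rfl
    rw [h2]
    exact (Nat.coprime_add_mul_left_right Tb (Ks*Ls) Tb).mpr h1
  have hTbq : IsCoprime ((Tb:ℕ):ℤ) (q:ℤ) := Int.isCoprime_iff_gcd_eq_one.mpr (by
    simpa using hTbqN)
  have hcT : ∀ a : ℤ, (q:ℤ) ∣ (Tb:ℤ) * a → (q:ℤ) ∣ a := fun a ha =>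
    hTbq.symm.dvd_of_dvd_mul_left ha
  have hKsTb : IsCoprime ((Tb:ℕ):ℤ) ((Ks:ℕ):ℤ) := Int.isCoprime_iff_gcd_eq_one.mpr (by
    simpa using hκ.symm)
  have hyd : (q:ℤ) ∣ x * (Tb:ℕ) + y * (Ks:ℕ) := hy
  have hqZ : (q:ℤ) = (Ks:ℕ) * (Ls:ℕ) + (Tb:ℕ) * (Tb:ℕ) := by
    rw [hq]; push_cast; ring
  -- derived relation : q ∣ x * Ls - y * Tb
  have hxLs : (q:ℤ) ∣ x * (Ls:ℕ) - y * (Tb:ℕ) := by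
    apply hcT
    obtain ⟨u, hu⟩ := hyd
    exact ⟨(Ls:ℕ) * u - y, by push_cast at hu ⊢; linear_combination ((Ls:ℕ):ℤ) * hu + y * hqZ⟩
  -- translate ZMod equalities to divisibility
  have toDvd : ∀ a b : ℤ, ((a : ZMod q) = (b : ZMod q)) → (q:ℤ) ∣ (a - b) := by
    intro a b h
    exact (ZMod.intCast_zmod_eq_zero_iff_dvd _ q).mp (by push_cast; rw [h]; ring)
  have fromDvd : ∀ a b : ℤ, (q:ℤ) ∣ (a - b) → ((a : ZMod q) = (b : ZMod q)) := by
    intro a b h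
    have h2 := (ZMod.intCast_zmod_eq_zero_iff_dvd (a-b) q).mpr h
    push_cast at h2
    exact sub_eq_zero.mp h2
  -- bounds on κ and lam
  have hκle : κ ≤ Tb := by
    by_contra hcon
    push_neg at hcon
    obtain ⟨d, r, hdr, hrlt⟩ : ∃ d r, Tb * d + r = K ∧ r < Tb :=
      ⟨_, _, Nat.div_add_mod K Tb, Nat.mod_lt K h1Tb⟩
    refine hκmin (Tb - r) (by omega) ?_
    have h2 : K + 1 + (Tb - r) = 1 + Tb * (d + 1) := by
      have h3 : Tb * (d+1) = Tb * d + Tb := by ring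
      omega
    rw [h2]
    exact ((Nat.coprime_add_mul_left_right Tb 1 (d+1)).mpr (Nat.coprime_one_right Tb)).symm
  have hlamle : lam ≤ Tb := by
    by_contra hcon
    push_neg at hcon
    obtain ⟨d, r, hdr, hrlt⟩ : ∃ d r, Tb * d + r = L ∧ r < Tb :=
      ⟨_, _, Nat.div_add_mod L Tb, Nat.mod_lt L h1Tb⟩
    refine hlammin (Tb - r) (by omega) ?_
    have h2 : L + 1 + (Tb - r) = 1 + Tb * (d + 1) := by
      have h3 : Tb * (d+1) = Tb * d + Tb := by ring
      omega
    rw [h2]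
    exact ((Nat.coprime_add_mul_left_right Tb 1 (d+1)).mpr (Nat.coprime_one_right Tb)).symm
  -- the key zero relation in ZMod q
  have hrel : ((x:ZMod q)) * (Tb:ℕ) + (y:ZMod q) * (Ks:ℕ) = 0 := by
    have h2 := (ZMod.intCast_zmod_eq_zero_iff_dvd (x * (Tb:ℕ) + y * (Ks:ℕ)) q).mpr hyd
    push_cast at h2
    push_cast
    linear_combination h2
  have hrel2 : ((x:ZMod q)) * (Ls:ℕ) - (y:ZMod q) * (Tb:ℕ) = 0 := by
    have h2 := (ZMod.intCast_zmod_eq_zero_iff_dvd (x * (Ls:ℕ) - y * (Tb:ℕ)) q).mpr hxLs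
    push_cast at h2
    push_cast
    linear_combination h2
  constructor
  · -- Part 1 : TR ∩ BR
    classical
    have hrelP := hrel
    push_cast [hKsdef] at hrelP
    set S1 : Finset ℕ := Finset.range (Tb - κ) ∪ Finset.Ico K (K + Tb) with hS1
    set f1 : ℕ → ZMod q := fun s : ℕ => (y:ZMod q) * (s:ℕ) - (x:ZMod q) with hf1
    have hS1mem : ∀ s, s ∈ S1 ↔ (s < Tb - κ ∨ (K ≤ s ∧ s < K + Tb)) := by
      intro s
      simp [hS1, Finset.mem_union, Finset.mem_range, Finset.mem_Ico]
    have hinj : Set.InjOn f1 ↑S1 := by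
      intro s hs s' hs' hss
      rw [Finset.mem_coe, hS1mem] at hs hs'
      have hd : (q:ℤ) ∣ (y * s - x) - (y * s' - x) := by
        apply toDvd
        push_cast
        simpa [hf1] using hss
      have hd2 : (q:ℤ) ∣ x * ((Tb:ℕ) * ((s:ℤ) - s')) := by
        obtain ⟨u, hu⟩ := hd
        obtain ⟨v, hv⟩ := hyd
        exact ⟨((s:ℤ) - s') * v - (Ks:ℕ) * u, by linear_combination ((s:ℤ)-(s':ℤ)) * hv - ((Ks:ℕ):ℤ) * hu⟩
      have hd3 := hcT _ (hcx _ hd2)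
      have h0 : (s:ℤ) - s' = 0 := by
        refine Int.eq_zero_of_abs_lt_dvd hd3 (abs_lt.mpr ⟨by omega, by omega⟩)
      omega
    have hseteq : ({z : ZMod q | ∃ i < K, ∃ j < T,
        z = (y : ZMod q) * (i : ℕ) + ((y : ZMod q) * (j : ℕ) - (x : ZMod q))} ∩
     {z : ZMod q | ∃ i < T, ∃ j < T,
        z = ((x : ZMod q) * (i : ℕ) + (K : ZMod q) * (y : ZMod q))
          + ((y : ZMod q) * (j : ℕ) - (x : ZMod q))}) = ↑(S1.image f1) := by
      ext z
      simp only [Set.mem_inter_iff, Set.mem_setOf_eq, Finset.coe_image, Set.mem_image,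
        Finset.mem_coe]
      constructor
      · rintro ⟨⟨i, hi, j, hj, hz1⟩, ⟨a, ha, b, hb, hz2⟩⟩
        have heq := hz1.symm.trans hz2
        refine ⟨i + j, ?_, by rw [hz1, hf1]; push_cast; ring⟩
        rw [hS1mem]
        have hd : (q:ℤ) ∣ (y * ((i:ℤ)+j) - (x * a + K * y + y * b)) := by
          apply toDvd
          push_cast
          linear_combination heq
        have hDdvd : (q:ℤ) ∣ x * ((Ks:ℕ) * a + (Tb:ℕ) * ((i:ℤ)+j) - (Tb:ℕ) * K - (Tb:ℕ) * b) := by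
          obtain ⟨u, hu⟩ := hd
          obtain ⟨v, hv⟩ := hyd
          exact ⟨((i:ℤ)+j-K-b) * v - (Ks:ℕ) * u,
            by linear_combination ((i:ℤ)+(j:ℤ)-(K:ℤ)-(b:ℤ)) * hv - ((Ks:ℕ):ℤ) * hu⟩
        have hD := hcx _ hDdvd
        have haTb : (a:ℤ) ≤ (Tb:ℕ) := by omega
        have hbTb : (b:ℤ) ≤ (Tb:ℕ) := by omega
        have hijb : (i:ℤ) + j ≤ (K:ℤ) + Tb - 1 := by omega
        have e1 : ((Tb:ℕ):ℤ) * K < ((Ls:ℕ):ℤ) * Ks :=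
          mul_lt_mul'' (by exact_mod_cast hTbL.trans_le (by omega : L ≤ Ls))
            (by exact_mod_cast (by omega : K < Ks)) (by positivity) (by positivity)
        have e2 : ((Ks:ℕ):ℤ) * Tb < ((Ks:ℕ):ℤ) * Ls :=
          mul_lt_mul_of_pos_left (by exact_mod_cast (by omega : Tb < Ls))
            (by exact_mod_cast (by omega : 0 < Ks))
        have hD0 : (Ks:ℕ) * (a:ℤ) + (Tb:ℕ) * ((i:ℤ)+j) - (Tb:ℕ) * K - (Tb:ℕ) * b = 0 := by
          refine Int.eq_zero_of_abs_lt_dvd hD (abs_lt.mpr ⟨?_, ?_⟩)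
          · have p1 : (0:ℤ) ≤ (Ks:ℕ) * (a:ℤ) := by positivity
            have p2 : (0:ℤ) ≤ ((Tb:ℕ):ℤ) * ((i:ℤ)+j) := by positivity
            have p4 : ((Tb:ℕ):ℤ) * b ≤ ((Tb:ℕ):ℤ) * Tb := by
              apply mul_le_mul_of_nonneg_left hbTb (by positivity)
            rw [hqZ]
            nlinarith [e1]
          · have p1 : ((Ks:ℕ):ℤ) * (a:ℤ) ≤ ((Ks:ℕ):ℤ) * Tb := by
              apply mul_le_mul_of_nonneg_left haTb (by positivity)
            have p2 : ((Tb:ℕ):ℤ) * ((i:ℤ)+j) ≤ ((Tb:ℕ):ℤ) * ((K:ℤ) + Tb - 1) := by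
              apply mul_le_mul_of_nonneg_left hijb (by positivity)
            have p3 : (0:ℤ) ≤ ((Tb:ℕ):ℤ) * b := by positivity
            rw [hqZ]
            nlinarith [e2]
        have hTbdvda : ((Tb:ℕ):ℤ) ∣ ((Ks:ℕ):ℤ) * (a:ℤ) := ⟨(K:ℤ) + b - ((i:ℤ)+j), by linear_combination hD0⟩
        have hTba : Tb ∣ a := by exact_mod_cast hKsTb.dvd_of_dvd_mul_left hTbdvda
        have hcase : a = 0 ∨ a = Tb := by
          rcases Nat.eq_zero_or_pos a with h|h
          · exact Or.inl h
          · exact Or.inr (le_antisymm (by omega) (Nat.le_of_dvd h hTba))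
        rcases hcase with rfl|rfl
        · -- a = 0 : i + j = K + b
          right
          have h5 : ((Tb:ℕ):ℤ) * (((i:ℤ)+j) - K - b) = 0 := by push_cast at hD0 ⊢; linear_combination hD0
          rcases mul_eq_zero.mp h5 with h|h
          · exfalso; have : (Tb:ℕ) = (0:ℕ) := by exact_mod_cast h
            omega
          · omega
        · -- a = Tb : b = i + j + 1 + κ
          left
          have h5 : ((Tb:ℕ):ℤ) * (((Ks:ℕ):ℤ) + ((i:ℤ)+j) - K - b) = 0 := by
            push_cast at hD0 ⊢; linear_combination hD0
          rcases mul_eq_zero.mp h5 with h|h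
          · exfalso; have : (Tb:ℕ) = (0:ℕ) := by exact_mod_cast h
            omega
          · have h6 : (Ks:ℤ) + ((i:ℤ)+j) = (K:ℤ) + b := by omega
            rw [hKsdef] at h6
            push_cast at h6
            omega
      · rintro ⟨s, hs, rfl⟩
        rw [hS1mem] at hs
        rcases hs with hs | hs
        · constructor
          · exact ⟨0, by omega, s, by omega, by rw [hf1]; push_cast; ring⟩
          · refine ⟨Tb, by omega, s + 1 + κ, by omega, ?_⟩
            rw [hf1]
            push_cast
            linear_combination - hrelP
        · obtain ⟨b, rfl⟩ : ∃ b, s = K + b := ⟨s - K, by omega⟩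
          obtain ⟨K', hK'⟩ : ∃ K', K = K' + 1 := ⟨K - 1, by omega⟩
          constructor
          · refine ⟨K', by omega, b + 1, by omega, ?_⟩
            rw [hf1, hK']; push_cast; ring
          · refine ⟨0, by omega, b, by omega, ?_⟩
            rw [hf1]; push_cast; ring
    have hdisj : Disjoint (Finset.range (Tb - κ)) (Finset.Ico K (K + Tb)) := by
      rw [Finset.disjoint_left]
      intro s hs hs'
      simp only [Finset.mem_range] at hs
      simp only [Finset.mem_Ico] at hs'
      omega
    rw [hseteq, Set.ncard_coe_finset, Finset.card_image_of_injOn hinj, hS1,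
      Finset.card_union_of_disjoint hdisj, Finset.card_range, Nat.card_Ico]
    omega
  · -- Part 2 : BL ∩ BR
    classical
    have hrel2P := hrel2
    push_cast [hLsdef] at hrel2P
    have hKsPos : (0:ℤ) < ((Ks:ℕ):ℤ) := by exact_mod_cast (by omega : 0 < Ks)
    have hTbPos : (0:ℤ) < ((Tb:ℕ):ℤ) := by exact_mod_cast h1Tb
    have hKsgtTb : ((Tb:ℕ):ℤ) < ((Ks:ℕ):ℤ) := by exact_mod_cast (by omega : Tb < Ks)
    set S2 : Finset ℕ := Finset.range Tb ∪ Finset.Ico (L + lam) (L + Tb) with hS2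
    set f2 : ℕ → ZMod q := fun t : ℕ => (x:ZMod q) * (t:ℕ) + (K : ZMod q) * (y:ZMod q) with hf2
    have hS2mem : ∀ t, t ∈ S2 ↔ (t < Tb ∨ (L + lam ≤ t ∧ t < L + Tb)) := by
      intro t
      simp [hS2, Finset.mem_union, Finset.mem_range, Finset.mem_Ico]
    have hinj : Set.InjOn f2 ↑S2 := by
      intro t ht t' ht' htt
      rw [Finset.mem_coe, hS2mem] at ht ht'
      have hd : (q:ℤ) ∣ (x * t + K * y) - (x * t' + K * y) := by
        apply toDvd
        push_cast
        simpa [hf2] using htt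
      have hd2 : (q:ℤ) ∣ x * ((t:ℤ) - t') := by
        obtain ⟨u, hu⟩ := hd
        exact ⟨u, by linear_combination hu⟩
      have hd3 := hcx _ hd2
      have h0 : (t:ℤ) - t' = 0 := by
        refine Int.eq_zero_of_abs_lt_dvd hd3 (abs_lt.mpr ⟨by omega, by omega⟩)
      omega
    have hseteq : ({z : ZMod q | ∃ i < T, ∃ j < L,
        z = ((x : ZMod q) * (i : ℕ) + (K : ZMod q) * (y : ZMod q)) + (x : ZMod q) * (j : ℕ)} ∩
     {z : ZMod q | ∃ i < T, ∃ j < T,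
        z = ((x : ZMod q) * (i : ℕ) + (K : ZMod q) * (y : ZMod q))
          + ((y : ZMod q) * (j : ℕ) - (x : ZMod q))}) = ↑(S2.image f2) := by
      ext z
      simp only [Set.mem_inter_iff, Set.mem_setOf_eq, Finset.coe_image, Set.mem_image,
        Finset.mem_coe]
      constructor
      · rintro ⟨⟨i, hi, j, hj, hz1⟩, ⟨a, ha, b, hb, hz2⟩⟩
        have heq := hz1.symm.trans hz2
        refine ⟨i + j, ?_, by rw [hz1, hf2]; push_cast; ring⟩
        rw [hS2mem]
        have hd : (q:ℤ) ∣ (x * ((i:ℤ)+j+1) - (x * a + y * b)) := by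
          apply toDvd
          push_cast
          linear_combination heq
        have hE : (q:ℤ) ∣ x * ((Ks:ℕ) * ((i:ℤ)+j+1-a) + (Tb:ℕ) * b) := by
          obtain ⟨u, hu⟩ := hd
          obtain ⟨v, hv⟩ := hyd
          exact ⟨(Ks:ℕ) * u + b * v, by linear_combination ((Ks:ℕ):ℤ) * hu + (b:ℤ) * hv⟩
        have hEd := hcx _ hE
        obtain ⟨c, hc⟩ := hEd
        have haTb : (a:ℤ) ≤ (Tb:ℕ) := by omega
        have hbTb : (b:ℤ) ≤ (Tb:ℕ) := by omega
        have hijb : (i:ℤ) + j ≤ (L:ℤ) + Tb - 1 := by omega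
        have e2 : ((Ks:ℕ):ℤ) * Tb < ((Ks:ℕ):ℤ) * Ls :=
          mul_lt_mul_of_pos_left (by exact_mod_cast (by omega : Tb < Ls)) hKsPos
        have hql : -(q:ℤ) < (Ks:ℕ) * ((i:ℤ)+j+1-a) + (Tb:ℕ) * b := by
          have p1 : ((Ks:ℕ):ℤ) * (1 - (Tb:ℕ)) ≤ ((Ks:ℕ):ℤ) * ((i:ℤ)+j+1-a) :=
            mul_le_mul_of_nonneg_left (by omega) hKsPos.le
          have p3 : (0:ℤ) ≤ ((Tb:ℕ):ℤ) * b := by positivity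
          have hTT : (0:ℤ) ≤ ((Tb:ℕ):ℤ) * Tb := by positivity
          rw [hqZ]
          linarith only [p1, p3, e2, hKsPos, hTT]
        have hqu : (Ks:ℕ) * ((i:ℤ)+j+1-a) + (Tb:ℕ) * b < 2 * (q:ℤ) := by
          have p1 : ((Ks:ℕ):ℤ) * ((i:ℤ)+j+1-a) ≤ ((Ks:ℕ):ℤ) * ((L:ℤ) + Tb) :=
            mul_le_mul_of_nonneg_left (by omega) hKsPos.le
          have p2 : ((Ks:ℕ):ℤ) * ((L:ℤ) + Tb) < ((Ks:ℕ):ℤ) * (2 * Ls) :=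
            mul_lt_mul_of_pos_left (by
              have : L + Tb < 2 * Ls := by omega
              exact_mod_cast this) hKsPos
          have p3 : ((Tb:ℕ):ℤ) * b ≤ ((Tb:ℕ):ℤ) * Tb :=
            mul_le_mul_of_nonneg_left hbTb hTbPos.le
          have hTT : (0:ℤ) ≤ ((Tb:ℕ):ℤ) * Tb := by positivity
          rw [hqZ]
          linarith only [p1, p2, p3, hTT]
        have hc01 : c = 0 ∨ c = 1 := by
          rcases lt_or_ge c 0 with h | h
          · exfalso
            have h3 : (q:ℤ) * c ≤ (q:ℤ) * (-1) :=
              mul_le_mul_of_nonneg_left (by omega) (by positivity)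
            have h4 : (q:ℤ) * (-1) = -(q:ℤ) := by ring
            linarith only [hql, hc, h3, h4]
          rcases lt_or_ge c 2 with h2 | h2
          · omega
          · exfalso
            have h3 : (q:ℤ) * 2 ≤ (q:ℤ) * c :=
              mul_le_mul_of_nonneg_left h2 (by positivity)
            linarith only [hqu, hc, h3]
        rcases hc01 with rfl | rfl
        · -- E = 0 case : b = 0, a = i + j + 1
          left
          rw [mul_zero] at hc
          obtain ⟨w, hw⟩ : ∃ w : ℤ, w = (i:ℤ)+j+1-a := ⟨_, rfl⟩
          rw [← hw] at hc
          have hTw : ((Tb:ℕ):ℤ) ∣ ((Ks:ℕ):ℤ) * w := ⟨-(b:ℤ), by linear_combination hc⟩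
          have hTw2 : ((Tb:ℕ):ℤ) ∣ w := hKsTb.dvd_of_dvd_mul_left hTw
          have hp3 : (0:ℤ) ≤ ((Tb:ℕ):ℤ) * b := by positivity
          have hw1 : w ≤ 0 := by
            have h3 : ((Ks:ℕ):ℤ) * w ≤ ((Ks:ℕ):ℤ) * 0 := by
              rw [mul_zero]
              linarith only [hc, hp3]
            exact le_of_mul_le_mul_left h3 hKsPos
          have hw2 : -((Tb:ℕ):ℤ) < w := by
            by_contra hcon
            push_neg at hcon
            have h3 : ((Ks:ℕ):ℤ) * w ≤ ((Ks:ℕ):ℤ) * (-((Tb:ℕ):ℤ)) :=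
              mul_le_mul_of_nonneg_left hcon hKsPos.le
            have h4 : ((Tb:ℕ):ℤ) * b ≤ ((Tb:ℕ):ℤ) * Tb :=
              mul_le_mul_of_nonneg_left hbTb hTbPos.le
            have h5 : ((Tb:ℕ):ℤ) * Tb < ((Ks:ℕ):ℤ) * Tb :=
              mul_lt_mul_of_pos_right hKsgtTb hTbPos
            linarith only [h3, hc, h4, h5]
          have hw0 : w = 0 :=
            Int.eq_zero_of_abs_lt_dvd hTw2 (abs_lt.mpr ⟨hw2, by linarith only [hw1, hTbPos]⟩)
          have hb0 : ((Tb:ℕ):ℤ) * b = 0 := by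
            rw [hw0] at hc
            linarith only [hc]
          have hb0' : (b:ℤ) = 0 := by
            rcases mul_eq_zero.mp hb0 with h | h
            · exact absurd h hTbPos.ne'
            · exact h
          have ha' : (a:ℤ) = (i:ℤ) + j + 1 := by rw [hw] at hw0; omega
          omega
        · -- E = q case : b = Tb, i + j = a + L + lam
          right
          rw [mul_one, hqZ] at hc
          obtain ⟨w, hw⟩ : ∃ w : ℤ, w = (i:ℤ)+j+1-a-(Ls:ℕ) := ⟨_, rfl⟩
          have hTw : ((Tb:ℕ):ℤ) ∣ ((Ks:ℕ):ℤ) * w :=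
            ⟨((Tb:ℕ):ℤ) - b, by rw [hw]; linear_combination hc⟩
          have hTw2 : ((Tb:ℕ):ℤ) ∣ w := hKsTb.dvd_of_dvd_mul_left hTw
          have hKsw : ((Ks:ℕ):ℤ) * w = ((Tb:ℕ):ℤ) * (((Tb:ℕ):ℤ) - b) := by
            rw [hw]; linear_combination hc
          have hw1 : 0 ≤ w := by
            have h3 : ((Ks:ℕ):ℤ) * 0 ≤ ((Ks:ℕ):ℤ) * w := by
              rw [mul_zero, hKsw]
              exact mul_nonneg hTbPos.le (by linarith only [hbTb])
            exact le_of_mul_le_mul_left h3 hKsPos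
          have hw2 : w < ((Tb:ℕ):ℤ) := by
            by_contra hcon
            push_neg at hcon
            have h3 : ((Ks:ℕ):ℤ) * Tb ≤ ((Ks:ℕ):ℤ) * w :=
              mul_le_mul_of_nonneg_left hcon hKsPos.le
            have h4 : ((Tb:ℕ):ℤ) * (((Tb:ℕ):ℤ) - b) ≤ ((Tb:ℕ):ℤ) * Tb :=
              mul_le_mul_of_nonneg_left (by linarith only [Int.natCast_nonneg b]) hTbPos.le
            have h5 : ((Tb:ℕ):ℤ) * Tb < ((Ks:ℕ):ℤ) * Tb :=
              mul_lt_mul_of_pos_right hKsgtTb hTbPos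
            linarith only [h3, h4, h5, hKsw]
          have hw0 : w = 0 :=
            Int.eq_zero_of_abs_lt_dvd hTw2 (abs_lt.mpr ⟨by linarith only [hw1, hTbPos], hw2⟩)
          have hbT : (b:ℤ) = ((Tb:ℕ):ℤ) := by
            rw [hw0, mul_zero] at hKsw
            rcases mul_eq_zero.mp hKsw.symm with h | h
            · exact absurd h hTbPos.ne'
            · linarith only [h]
          have ht' : (i:ℤ) + j + 1 = (a:ℤ) + (Ls:ℕ) := by rw [hw] at hw0; omega
          have hLsc : ((Ls:ℕ):ℤ) = (L:ℤ) + 1 + lam := by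
            rw [hLsdef]; push_cast; ring
          constructor
          · omega
          · omega
      · rintro ⟨t, ht, rfl⟩
        rw [hS2mem] at ht
        rcases ht with ht | ht
        · constructor
          · exact ⟨t, by omega, 0, by omega, by rw [hf2]; push_cast; ring⟩
          · refine ⟨t + 1, by omega, 0, by omega, ?_⟩
            rw [hf2]; push_cast; ring
        · obtain ⟨a, rfl⟩ : ∃ a, t = L + lam + a := ⟨t - L - lam, by omega⟩
          obtain ⟨L', hL'⟩ : ∃ L', L = L' + 1 := ⟨L - 1, by omega⟩
          constructor
          · refine ⟨lam + a + 1, by omega, L', by omega, ?_⟩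
            rw [hf2, hL']; push_cast; ring
          · refine ⟨a, by omega, Tb, by omega, ?_⟩
            rw [hf2]
            push_cast
            linear_combination hrel2P
    have hdisj : Disjoint (Finset.range Tb) (Finset.Ico (L + lam) (L + Tb)) := by
      rw [Finset.disjoint_left]
      intro s hs hs'
      simp only [Finset.mem_range] at hs
      simp only [Finset.mem_Ico] at hs'
      omega
    rw [hseteq, Set.ncard_coe_finset, Finset.card_image_of_injOn hinj, hS2,
      Finset.card_union_of_disjoint hdisj, Finset.card_range, Nat.card_Ico]
    omega
end

section
/- Under the CATₓ construction with parameters K ≥ L ≥ T ≥ 2, the total number of distinct entries in the cyclic-addition degree table is N = (K+1)(L+1) + (T−1)² + κ + λ, i.e., |TL ∪ TR ∪ BL ∪ BR| = (K+1)(L+1) + (T−1)² + κ + λ. -/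
/-!
The entries of the table are the values of the additive map `G (a, b) = y * a + x * b` from `ℤ²`
to `ℤ_q` on a staircase region: `TL`, `TR`, `BL`, `BR` are the images of the rectangle
`[0, K) × [0, L)`, the row `b = -1`, the column `a = K` and the square `[K, K + T̄] × [-1, T̄ - 1]`.
As `x` is a unit mod `q`, the kernel of `G` is the lattice spanned by `u = (K*, T̄)` and
`v = (-T̄, L*)`, whose determinant is `q`. Minimality gives `κ, λ < T̄`. Translating the top of the
column `a = K` by `-v` and the far end of the top row of the square by `-u` turns the
region into one with the same image and `(K+1)(L+1) + T̄² + κ + λ` points, no two of which differ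
by a nonzero lattice vector `m u + n v`: its width and height force `n = 0` and `|m| ≤ 1`, and
`±u` does not fit into it.
-/

open Finset

theorem Nat.lt_of_forall_lt_not_coprime_add {a t k : ℕ} (ht : 0 < t)
    (h : ∀ m < k, ¬ Nat.Coprime (a + m) t) : k < t := by
  set m := (t + 1 - a % t) % t
  have hmod : a + m ≡ 1 [MOD t] :=
    calc a + m ≡ a % t + (t + 1 - a % t) [MOD t] :=
          (Nat.mod_modEq a t).symm.add (Nat.mod_modEq _ t)
      _ = 1 + t := by have := Nat.mod_lt a ht; omega
      _ ≡ 1 [MOD t] := Nat.add_modEq_right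
  by_contra! hk
  exact h m (by have := Nat.mod_lt (t + 1 - a % t) ht; omega)
    (hmod.gcd_eq.trans (Nat.gcd_one_left t))

theorem Int.eq_zero_and_abs_le_one_of_abs_lt {Ks Ls t m n : ℤ} (hKs : 0 ≤ Ks) (ht : 0 ≤ t)
    (hA : |m * Ks - n * t| < Ks + t) (hA' : |m * Ks - n * t| < 2 * Ks)
    (hB : |m * t + n * Ls| < Ls) : n = 0 ∧ |m| ≤ 1 := by
  rw [abs_lt] at hA hB
  have hn : n = 0 := by
    rcases lt_trichotomy m 0 with hm | rfl | hm <;> rcases lt_trichotomy n 0 with hn | hn | hn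
    all_goals first | exact hn | nlinarith
  subst hn
  rw [zero_mul, sub_zero, abs_mul, abs_of_nonneg hKs] at hA'
  have := lt_of_mul_lt_mul_right hA' hKs
  exact ⟨rfl, by omega⟩

def latticeMap (q : ℕ) (x y : ℤ) : ℤ × ℤ →+ ZMod q where
  toFun p := (y : ZMod q) * (p.1 : ZMod q) + (x : ZMod q) * (p.2 : ZMod q)
  map_zero' := by simp
  map_add' p p' := by simp only [Prod.fst_add, Prod.snd_add, Int.cast_add]; ring

section

variable {q : ℕ} {x y : ℤ}

theorem latticeMap_apply (p : ℤ × ℤ) :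
    latticeMap q x y p = (y : ZMod q) * (p.1 : ZMod q) + (x : ZMod q) * (p.2 : ZMod q) := rfl

theorem latticeMap_eq_zero_iff_dvd {w : ℤ × ℤ} :
    latticeMap q x y w = 0 ↔ (q : ℤ) ∣ y * w.1 + x * w.2 := by
  rw [← ZMod.intCast_zmod_eq_zero_iff_dvd, latticeMap_apply]
  push_cast; rfl

theorem latticeMap_eq_zero_iff {Ks Ls t : ℤ} (hq0 : q ≠ 0) (hq : (q : ℤ) = Ks * Ls + t * t)
    (hx : IsCoprime x q) (hKs : IsCoprime Ks t) (hu : (q : ℤ) ∣ x * t + y * Ks) {w : ℤ × ℤ} :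
    latticeMap q x y w = 0 ↔ ∃ m n : ℤ, w = (m * Ks - n * t, m * t + n * Ls) := by
  have hv : (q : ℤ) ∣ x * Ls - y * t := by
    have hKq : IsCoprime Ks q := by
      rw [hq, add_comm]; exact (hKs.mul_right hKs).add_mul_left_right Ls
    refine hKq.symm.dvd_of_dvd_mul_left ?_
    have : Ks * (x * Ls - y * t) = x * q - t * (x * t + y * Ks) := by rw [hq]; ring
    rw [this]; exact dvd_sub (dvd_mul_left _ _) (hu.mul_left t)
  rw [latticeMap_eq_zero_iff_dvd]
  constructor
  · obtain ⟨a, b⟩ := w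
    intro hw
    -- Cramer's rule for the basis `(Ks, t)`, `(-t, Ls)`, of determinant `q`
    obtain ⟨m, hm⟩ : (q : ℤ) ∣ Ls * a + t * b := by
      refine hx.symm.dvd_of_dvd_mul_left ?_
      have : x * (Ls * a + t * b) = a * (x * Ls - y * t) + t * (y * a + x * b) := by ring
      rw [this]; exact dvd_add (hv.mul_left a) (hw.mul_left t)
    obtain ⟨n, hn⟩ : (q : ℤ) ∣ Ks * b - t * a := by
      refine hx.symm.dvd_of_dvd_mul_left ?_
      have : x * (Ks * b - t * a) = Ks * (y * a + x * b) - a * (x * t + y * Ks) := by ring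
      rw [this]; exact dvd_sub (hw.mul_left Ks) (hu.mul_left a)
    have hq' : (q : ℤ) ≠ 0 := by exact_mod_cast hq0
    refine ⟨m, n, Prod.ext ?_ ?_⟩ <;> apply mul_left_cancel₀ hq'
    · linear_combination Ks * hm - t * hn + a * hq
    · linear_combination t * hm + Ls * hn + b * hq
  · rintro ⟨m, n, rfl⟩
    have : y * (m * Ks - n * t) + x * (m * t + n * Ls) =
        m * (x * t + y * Ks) + n * (x * Ls - y * t) := by ring
    rw [this]; exact dvd_add (hu.mul_left m) (hv.mul_left n)

noncomputable def reducedIndexSet (K L t κ lam : ℕ) : Finset (ℤ × ℤ) :=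
  Icc 0 ((K : ℤ) - 1) ×ˢ Icc (-1) ((L : ℤ) - 1) ∪ {(K : ℤ)} ×ˢ Icc (-1) ((L : ℤ) + lam - 1) ∪
    Icc ((K : ℤ) + 1) (K + t) ×ˢ Icc (-1) ((t : ℤ) - 2) ∪ Icc ((K : ℤ) + 1) (K + κ) ×ˢ {(t : ℤ) - 1}

variable {K L t κ lam : ℕ}

theorem mem_reducedIndexSet {a b : ℤ} :
    (a, b) ∈ reducedIndexSet K L t κ lam ↔ -1 ≤ b ∧
      (0 ≤ a ∧ a < K ∧ b < L ∨ a = K ∧ b < L + lam ∨ K < a ∧ a ≤ K + t ∧ b < t - 1 ∨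
        K < a ∧ a ≤ K + κ ∧ b = t - 1) := by
  simp only [reducedIndexSet, mem_union, mem_product, mem_Icc, mem_singleton]
  omega

theorem card_reducedIndexSet :
    #(reducedIndexSet K L t κ lam) = (K + 1) * (L + 1) + t ^ 2 + κ + lam := by
  rw [reducedIndexSet, card_union_of_disjoint, card_union_of_disjoint, card_union_of_disjoint]
  · simp only [card_product, Int.card_Icc, card_singleton]
    have e1 : ((K : ℤ) - 1 + 1 - 0).toNat = K := by omega
    have e2 : ((L : ℤ) - 1 + 1 - -1).toNat = L + 1 := by omega
    have e3 : ((L : ℤ) + lam - 1 + 1 - -1).toNat = L + lam + 1 := by omega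
    have e4 : ((K : ℤ) + t + 1 - (K + 1)).toNat = t := by omega
    have e5 : ((t : ℤ) - 2 + 1 - -1).toNat = t := by omega
    have e6 : ((K : ℤ) + κ + 1 - (K + 1)).toNat = κ := by omega
    rw [e1, e2, e3, e4, e5, e6]
    ring
  all_goals
    refine disjoint_left.2 fun {p} h₁ h₂ => ?_
    simp only [mem_union, mem_product, mem_Icc, mem_singleton] at h₁ h₂
    omega

def degreeTable (q K L T : ℕ) (x y : ℤ) : Set (ZMod q) :=
  {z : ZMod q | ∃ i < K, ∃ j < L,
      z = (y : ZMod q) * (i : ℕ) + (x : ZMod q) * (j : ℕ)} ∪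
   {z : ZMod q | ∃ i < K, ∃ j < T,
      z = (y : ZMod q) * (i : ℕ) + ((y : ZMod q) * (j : ℕ) - (x : ZMod q))} ∪
   {z : ZMod q | ∃ i < T, ∃ j < L,
      z = ((x : ZMod q) * (i : ℕ) + (K : ZMod q) * (y : ZMod q)) + (x : ZMod q) * (j : ℕ)} ∪
   {z : ZMod q | ∃ i < T, ∃ j < T,
      z = ((x : ZMod q) * (i : ℕ) + (K : ZMod q) * (y : ZMod q))
        + ((y : ZMod q) * (j : ℕ) - (x : ZMod q))}

theorem latticeMap_image_subset_degreeTable (hκ : κ ≤ t) (hlam : lam ≤ t) :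
    latticeMap q x y '' reducedIndexSet K L t κ lam ⊆ degreeTable q K L (t + 1) x y := by
  rintro _ ⟨⟨a, b⟩, hab, rfl⟩
  rw [mem_coe, mem_reducedIndexSet] at hab
  simp only [degreeTable, Set.mem_union, Set.mem_ofPred_eq, latticeMap_apply]
  by_cases hBR : K ≤ a ∧ b < t
  · obtain ⟨i, rfl⟩ : ∃ i : ℕ, b = i - 1 := ⟨(b + 1).toNat, by omega⟩
    obtain ⟨j, rfl⟩ : ∃ j : ℕ, a = K + j := ⟨(a - K).toNat, by omega⟩
    exact Or.inr ⟨i, by omega, j, by omega, by push_cast; ring⟩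
  obtain ⟨i, rfl⟩ : ∃ i : ℕ, a = i := ⟨a.toNat, by omega⟩
  rcases (by omega : i < K ∧ b = -1 ∨ i < K ∧ 0 ≤ b ∨ i = K ∧ 0 ≤ b) with
    ⟨hi, rfl⟩ | ⟨hi, hb⟩ | ⟨rfl, hb⟩
  · exact Or.inl <| Or.inl <| Or.inr ⟨i, hi, 0, by omega, by push_cast; ring⟩
  · obtain ⟨j, rfl⟩ : ∃ j : ℕ, b = j := ⟨b.toNat, by omega⟩
    exact Or.inl <| Or.inl <| Or.inl ⟨i, hi, j, by omega, by push_cast; ring⟩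
  · obtain ⟨i', j, hi', hj, rfl⟩ : ∃ i' j : ℕ, i' < t + 1 ∧ j < L ∧ b = i' + j :=
      ⟨(b - min b (L - 1)).toNat, (min b (L - 1)).toNat, by omega, by omega, by omega⟩
    exact Or.inl <| Or.inr ⟨i', hi', j, hj, by push_cast; ring⟩

theorem degreeTable_subset_latticeMap_image (ht : 1 ≤ t) (htL : t ≤ L) (hLK : L ≤ K)
    (hu : latticeMap q x y (K + 1 + κ, t) = 0) (hv : latticeMap q x y (-t, L + 1 + lam) = 0) :
    degreeTable q K L (t + 1) x y ⊆ latticeMap q x y '' reducedIndexSet K L t κ lam := by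
  simp only [Set.subset_def, Set.mem_image, mem_coe, Prod.exists, mem_reducedIndexSet]
  rintro z (((⟨i, hi, j, hj, rfl⟩ | ⟨i, hi, j, hj, rfl⟩) | ⟨i, hi, j, hj, rfl⟩) |
    ⟨i, hi, j, hj, rfl⟩)
  · exact ⟨i, j, by omega, by rw [latticeMap_apply]; push_cast; ring⟩
  · exact ⟨i + j, -1, by omega, by rw [latticeMap_apply]; push_cast; ring⟩
  · by_cases hs : i + j < L + lam
    · exact ⟨K, i + j, by omega, by rw [latticeMap_apply]; push_cast; ring⟩
    refine ⟨K + t, i + j - (L + 1 + lam), by omega, ?_⟩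
    rw [← add_zero (latticeMap q x y _), ← hv, ← map_add, Prod.mk_add_mk, latticeMap_apply]
    push_cast; ring
  · by_cases hs : i = t ∧ κ < j
    · obtain ⟨rfl, hj'⟩ := hs
      refine ⟨K + j - (K + 1 + κ), -1, by omega, ?_⟩
      rw [← add_zero (latticeMap q x y _), ← hu, ← map_add, Prod.mk_add_mk, latticeMap_apply]
      push_cast; ring
    exact ⟨K + j, i - 1, by omega, by rw [latticeMap_apply]; push_cast; ring⟩

theorem injOn_latticeMap_reducedIndexSet (htL : t ≤ L) (hLK : L ≤ K)
    (hker : ∀ w, latticeMap q x y w = 0 →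
      ∃ m n : ℤ, w = (m * (K + 1 + κ) - n * t, m * t + n * (L + 1 + lam))) :
    Set.InjOn (latticeMap q x y) (reducedIndexSet K L t κ lam) := by
  rintro ⟨a, b⟩ hp ⟨a', b'⟩ hp' h
  rw [mem_coe, mem_reducedIndexSet] at hp hp'
  obtain ⟨m, n, hw⟩ := hker ((a, b) - (a', b')) (by rw [map_sub, h, sub_self])
  simp only [Prod.mk_sub_mk, Prod.mk.injEq] at hw ⊢
  obtain ⟨rfl, hm⟩ := Int.eq_zero_and_abs_le_one_of_abs_lt (Ks := K + 1 + κ) (Ls := L + 1 + lam)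
    (t := t) (by positivity) (by positivity)
    (by rw [← hw.1, abs_lt]; omega) (by rw [← hw.1, abs_lt]; omega) (by rw [← hw.2, abs_lt]; omega)
  obtain rfl | rfl | rfl : m = -1 ∨ m = 0 ∨ m = 1 := by rw [abs_le] at hm; omega
  all_goals omega

end

theorem stmt15_general (K L T : ℕ) (hT : 2 ≤ T) (hLT : T ≤ L) (hKL : L ≤ K)
    (κ lam : ℕ)
    (hκ : Nat.Coprime (K + 1 + κ) (T - 1)) (hκmin : ∀ m < κ, ¬ Nat.Coprime (K + 1 + m) (T - 1))
    (hlammin : ∀ m < lam, ¬ Nat.Coprime (L + 1 + m) (T - 1))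
    (q : ℕ) (hq : q = (K + 1 + κ) * (L + 1 + lam) + (T - 1) ^ 2)
    (x y : ℤ) (hx : Int.gcd x q = 1) (hy : (q : ℤ) ∣ x * (T - 1 : ℕ) + y * (K + 1 + κ : ℕ)) :
    ({z : ZMod q | ∃ i < K, ∃ j < L,
        z = (y : ZMod q) * (i : ℕ) + (x : ZMod q) * (j : ℕ)} ∪
     {z : ZMod q | ∃ i < K, ∃ j < T,
        z = (y : ZMod q) * (i : ℕ) + ((y : ZMod q) * (j : ℕ) - (x : ZMod q))} ∪
     {z : ZMod q | ∃ i < T, ∃ j < L,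
        z = ((x : ZMod q) * (i : ℕ) + (K : ZMod q) * (y : ZMod q)) + (x : ZMod q) * (j : ℕ)} ∪
     {z : ZMod q | ∃ i < T, ∃ j < T,
        z = ((x : ZMod q) * (i : ℕ) + (K : ZMod q) * (y : ZMod q))
          + ((y : ZMod q) * (j : ℕ) - (x : ZMod q))}).ncard
      = (K + 1) * (L + 1) + (T - 1) ^ 2 + κ + lam := by
  obtain ⟨t, rfl⟩ : ∃ t, T = t + 1 := ⟨T - 1, by omega⟩
  rw [Nat.add_sub_cancel] at hκ hκmin hlammin hq hy ⊢
  have hκt : κ < t := Nat.lt_of_forall_lt_not_coprime_add (by omega) hκmin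
  have hlamt : lam < t := Nat.lt_of_forall_lt_not_coprime_add (by omega) hlammin
  have hker : ∀ w, latticeMap q x y w = 0 ↔
      ∃ m n : ℤ, w = (m * (K + 1 + κ) - n * t, m * t + n * (L + 1 + lam)) := fun w =>
    latticeMap_eq_zero_iff (by rw [hq]; positivity) (by rw [hq]; push_cast; ring)
      (Int.isCoprime_iff_gcd_eq_one.2 hx) (by exact_mod_cast Nat.isCoprime_iff_coprime.2 hκ)
      (by exact_mod_cast hy)
  have himage : latticeMap q x y '' reducedIndexSet K L t κ lam = degreeTable q K L (t + 1) x y :=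
    (latticeMap_image_subset_degreeTable hκt.le hlamt.le).antisymm
      (degreeTable_subset_latticeMap_image (by omega) (by omega) hKL
        ((hker _).2 ⟨1, 0, by simp⟩) ((hker _).2 ⟨0, 1, by simp⟩))
  change (degreeTable q K L (t + 1) x y).ncard = _
  rw [← himage, (injOn_latticeMap_reducedIndexSet (by omega) hKL fun w => (hker w).1).ncard_image,
    Set.ncard_coe_finset, card_reducedIndexSet]

theorem stmt15 (K L T : ℕ) (hT : 2 ≤ T) (hLT : T ≤ L) (hKL : L ≤ K)
    (κ lam : ℕ)
    (hκ : Nat.Coprime (K + 1 + κ) (T - 1)) (hκmin : ∀ m < κ, ¬ Nat.Coprime (K + 1 + m) (T - 1))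
    (hlam : Nat.Coprime (L + 1 + lam) (T - 1))
    (hlammin : ∀ m < lam, ¬ Nat.Coprime (L + 1 + m) (T - 1))
    (q : ℕ) (hq : q = (K + 1 + κ) * (L + 1 + lam) + (T - 1) ^ 2)
    (x y : ℤ) (hx : Int.gcd x q = 1) (hy : (q : ℤ) ∣ x * (T - 1 : ℕ) + y * (K + 1 + κ : ℕ)) :
    ({z : ZMod q | ∃ i < K, ∃ j < L,
        z = (y : ZMod q) * (i : ℕ) + (x : ZMod q) * (j : ℕ)} ∪
     {z : ZMod q | ∃ i < K, ∃ j < T,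
        z = (y : ZMod q) * (i : ℕ) + ((y : ZMod q) * (j : ℕ) - (x : ZMod q))} ∪
     {z : ZMod q | ∃ i < T, ∃ j < L,
        z = ((x : ZMod q) * (i : ℕ) + (K : ZMod q) * (y : ZMod q)) + (x : ZMod q) * (j : ℕ)} ∪
     {z : ZMod q | ∃ i < T, ∃ j < T,
        z = ((x : ZMod q) * (i : ℕ) + (K : ZMod q) * (y : ZMod q))
          + ((y : ZMod q) * (j : ℕ) - (x : ZMod q))}).ncard
      = (K + 1) * (L + 1) + (T - 1) ^ 2 + κ + lam :=
  stmt15_general K L T hT hLT hKL κ lam hκ hκmin hlammin q hq x y hx hy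
end

section
/- Let K, L, T, r be positive integers with T ≤ K. In the GASP_r degree table with α^p = (0,...,K−1), α^s = KL + gap(T, K, r), β^p = (0, K, ..., (L−1)K), β^s = (KL, KL+1, ..., KL+T−1), the top-left quadrant TL = α^p + β^p is disjoint from each of TR = α^p + β^s, BL = α^s + β^p, and BR = α^s + β^s. -/
theorem stmt19 (K L T r : ℕ) (hK : 1 ≤ K) (hL : 1 ≤ L) (hT : 1 ≤ T)
    (hr1 : 1 ≤ r) (hrK : r ≤ K) (hrT : r ≤ T) (hTK : T ≤ K)
    (TL TR BL BR : Set ℕ)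
    (hTL : TL = {n | ∃ i < K, ∃ j < L, n = i + K * j})
    (hTR : TR = {n | ∃ i < K, ∃ j < T, n = i + (K * L + j)})
    (hBL : BL = {n | ∃ i < T, ∃ j < L, n = (K * L + K * (i / r) + i % r) + K * j})
    (hBR : BR = {n | ∃ i < T, ∃ j < T, n = (K * L + K * (i / r) + i % r) + (K * L + j)}) :
    Disjoint TL TR ∧ Disjoint TL BL ∧ Disjoint TL BR := by
  have hsmall : ∀ n ∈ TL, n < K * L := by
    rintro n hn
    rw [hTL] at hn
    obtain ⟨i, hi, j, hj, rfl⟩ := hn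
    calc i + K * j < K + K * j := by omega
    _ ≤ K * L := by nlinarith
  refine ⟨?_, ?_, ?_⟩
  · rw [Set.disjoint_left]
    intro n hn hn'
    have := hsmall n hn
    rw [hTR] at hn'
    obtain ⟨i, hi, j, hj, rfl⟩ := hn'
    omega
  · rw [Set.disjoint_left]
    intro n hn hn'
    have := hsmall n hn
    rw [hBL] at hn'
    obtain ⟨i, hi, j, hj, rfl⟩ := hn'
    omega
  · rw [Set.disjoint_left]
    intro n hn hn'
    have := hsmall n hn
    rw [hBR] at hn'
    obtain ⟨i, hi, j, hj, rfl⟩ := hn'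
    omega
end
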